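/- arXiv:1311.7125 — 3 statements merged into one kernel-verified Lean document; each statement's English description precedes it below -/
import Mathlib

section
/- For all natural numbers m, n with 0 ≤ m < n: hom(E_1^m, E_1^n) = 0, ext1(E_1^m, E_1^n) = n − m − 1, hom(E_1^n, E_1^m) = 1 + n − m, and ext1(E_1^n, E_1^m) = 0. -/
noncomputable section

open Module

universe u

/-- A representation of the quiver `Q1` (vertices 1, 2, 3; arrows 1→3, 1→2, 2→3)
over the field `k`, with finite-dimensional vector spaces at the vertices. -/
structure RepQ1 (k : Type u) [Field k] where
  V1 : Type u
  V2 : Type u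
  V3 : Type u
  [acg1 : AddCommGroup V1]
  [acg2 : AddCommGroup V2]
  [acg3 : AddCommGroup V3]
  [mod1 : Module k V1]
  [mod2 : Module k V2]
  [mod3 : Module k V3]
  [fd1 : FiniteDimensional k V1]
  [fd2 : FiniteDimensional k V2]
  [fd3 : FiniteDimensional k V3]
  r13 : V1 →ₗ[k] V3
  r12 : V1 →ₗ[k] V2
  r23 : V2 →ₗ[k] V3

attribute [instance] RepQ1.acg1 RepQ1.acg2 RepQ1.acg3 RepQ1.mod1 RepQ1.mod2 RepQ1.mod3
  RepQ1.fd1 RepQ1.fd2 RepQ1.fd3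

namespace RepQ1

variable {k : Type u} [Field k]

/-- The space of morphisms of representations `ρ → ρ'`:
triples `(f₁, f₂, f₃)` of linear maps commuting with the structure maps. -/
def homSpace (ρ ρ' : RepQ1 k) :
    Submodule k ((ρ.V1 →ₗ[k] ρ'.V1) × (ρ.V2 →ₗ[k] ρ'.V2) × (ρ.V3 →ₗ[k] ρ'.V3)) where
  carrier := { f | f.2.2 ∘ₗ ρ.r13 = ρ'.r13 ∘ₗ f.1 ∧
                   f.2.1 ∘ₗ ρ.r12 = ρ'.r12 ∘ₗ f.1 ∧
                   f.2.2 ∘ₗ ρ.r23 = ρ'.r23 ∘ₗ f.2.1 }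
  add_mem' := by
    rintro f g ⟨h1, h2, h3⟩ ⟨h1', h2', h3'⟩
    refine ⟨?_, ?_, ?_⟩ <;>
      simp only [Prod.fst_add, Prod.snd_add, LinearMap.add_comp, LinearMap.comp_add,
        h1, h2, h3, h1', h2', h3']
  zero_mem' := by
    refine ⟨?_, ?_, ?_⟩ <;> simp
  smul_mem' := by
    rintro c f ⟨h1, h2, h3⟩
    refine ⟨?_, ?_, ?_⟩ <;>
      simp only [Prod.smul_fst, Prod.smul_snd, LinearMap.smul_comp, LinearMap.comp_smul,
        h1, h2, h3]

/-- `hom ρ ρ'` is the `k`-dimension of the space of morphisms of representations `ρ → ρ'`. -/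
def hom (ρ ρ' : RepQ1 k) : ℕ := finrank k (homSpace ρ ρ')

/-- The linear map `Φ` whose cokernel computes `Ext¹(ρ, ρ')`. -/
def phi (ρ ρ' : RepQ1 k) :
    ((ρ.V1 →ₗ[k] ρ'.V1) × (ρ.V2 →ₗ[k] ρ'.V2) × (ρ.V3 →ₗ[k] ρ'.V3)) →ₗ[k]
      ((ρ.V1 →ₗ[k] ρ'.V3) × (ρ.V1 →ₗ[k] ρ'.V2) × (ρ.V2 →ₗ[k] ρ'.V3)) where
  toFun g := (g.2.2 ∘ₗ ρ.r13 - ρ'.r13 ∘ₗ g.1,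
              g.2.1 ∘ₗ ρ.r12 - ρ'.r12 ∘ₗ g.1,
              g.2.2 ∘ₗ ρ.r23 - ρ'.r23 ∘ₗ g.2.1)
  map_add' g h := by
    refine Prod.ext ?_ (Prod.ext ?_ ?_) <;>
      · simp only [Prod.fst_add, Prod.snd_add, LinearMap.add_comp, LinearMap.comp_add]
        abel
  map_smul' c g := by
    refine Prod.ext ?_ (Prod.ext ?_ ?_) <;>
      simp [LinearMap.smul_comp, LinearMap.comp_smul, smul_sub]

/-- `ext1 ρ ρ'` is the `k`-dimension of the cokernel of `Φ`; it equals
`dim Ext¹(ρ, ρ')` in the abelian category of representations of `Q1`. -/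
def ext1 (ρ ρ' : RepQ1 k) : ℕ :=
  finrank k (((ρ.V1 →ₗ[k] ρ'.V3) × (ρ.V1 →ₗ[k] ρ'.V2) × (ρ.V2 →ₗ[k] ρ'.V3)) ⧸
    LinearMap.range (phi ρ ρ'))

/-- A representation is exceptional if `hom ρ ρ = 1` and `ext1 ρ ρ = 0`. -/
def IsExceptional (ρ : RepQ1 k) : Prop := hom ρ ρ = 1 ∧ ext1 ρ ρ = 0

/-- Isomorphism of representations of `Q1`. -/
def Iso (ρ ρ' : RepQ1 k) : Prop :=
  ∃ (e1 : ρ.V1 ≃ₗ[k] ρ'.V1) (e2 : ρ.V2 ≃ₗ[k] ρ'.V2) (e3 : ρ.V3 ≃ₗ[k] ρ'.V3),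
    e3.toLinearMap ∘ₗ ρ.r13 = ρ'.r13 ∘ₗ e1.toLinearMap ∧
    e2.toLinearMap ∘ₗ ρ.r12 = ρ'.r12 ∘ₗ e1.toLinearMap ∧
    e3.toLinearMap ∘ₗ ρ.r23 = ρ'.r23 ∘ₗ e2.toLinearMap

end RepQ1

variable (k : Type u) [Field k]

/-- `π₊^m : k^{m+1} → k^m`, `(a₁,…,a_{m+1}) ↦ (a₁,…,a_m)`. -/
def piPlus (m : ℕ) : (Fin (m + 1) → k) →ₗ[k] (Fin m → k) :=
  LinearMap.funLeft k k Fin.castSucc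

/-- `π₋^m : k^{m+1} → k^m`, `(a₁,…,a_{m+1}) ↦ (a₂,…,a_{m+1})`. -/
def piMinus (m : ℕ) : (Fin (m + 1) → k) →ₗ[k] (Fin m → k) :=
  LinearMap.funLeft k k Fin.succ

/-- `j₊^m : k^m → k^{m+1}`, `(a₁,…,a_m) ↦ (a₁,…,a_m,0)`. -/
def jPlus (m : ℕ) : (Fin m → k) →ₗ[k] (Fin (m + 1) → k) where
  toFun a := Fin.snoc a 0
  map_add' a b := by
    ext i
    induction i using Fin.lastCases <;> simp
  map_smul' c a := by
    ext i
    induction i using Fin.lastCases <;> simp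

/-- `j₋^m : k^m → k^{m+1}`, `(a₁,…,a_m) ↦ (0,a₁,…,a_m)`. -/
def jMinus (m : ℕ) : (Fin m → k) →ₗ[k] (Fin (m + 1) → k) where
  toFun a := Fin.cons 0 a
  map_add' a b := by
    ext i
    induction i using Fin.cases <;> simp
  map_smul' c a := by
    ext i
    induction i using Fin.cases <;> simp

/-- The representation `E₁^m = (k^{m+1}, k^m, k^m)` with `ρ₁₃ = π₊^m`, `ρ₁₂ = π₋^m`, `ρ₂₃ = id`. -/
def E1 (m : ℕ) : RepQ1 k where
  V1 := Fin (m + 1) → k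
  V2 := Fin m → k
  V3 := Fin m → k
  r13 := piPlus k m
  r12 := piMinus k m
  r23 := LinearMap.id

/-- The representation `E₂^m = (k^m, k^{m+1}, k^{m+1})` with `ρ₁₃ = j₊^m`, `ρ₁₂ = j₋^m`, `ρ₂₃ = id`. -/
def E2 (m : ℕ) : RepQ1 k where
  V1 := Fin m → k
  V2 := Fin (m + 1) → k
  V3 := Fin (m + 1) → k
  r13 := jPlus k m
  r12 := jMinus k m
  r23 := LinearMap.id

/-- The representation `E₃^m = (k^m, k^m, k^{m+1})` with `ρ₁₃ = j₊^m`, `ρ₁₂ = id`, `ρ₂₃ = j₋^m`. -/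
def E3 (m : ℕ) : RepQ1 k where
  V1 := Fin m → k
  V2 := Fin m → k
  V3 := Fin (m + 1) → k
  r13 := jPlus k m
  r12 := LinearMap.id
  r23 := jMinus k m

/-- The representation `E₄^m = (k^{m+1}, k^{m+1}, k^m)` with `ρ₁₃ = π₊^m`, `ρ₁₂ = id`, `ρ₂₃ = π₋^m`. -/
def E4 (m : ℕ) : RepQ1 k where
  V1 := Fin (m + 1) → k
  V2 := Fin (m + 1) → k
  V3 := Fin m → k
  r13 := piPlus k m
  r12 := LinearMap.id
  r23 := piMinus k m

/-- The representation `M = (0, k, 0)` with zero structure maps. -/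
def Mrep : RepQ1 k where
  V1 := Fin 0 → k
  V2 := Fin 1 → k
  V3 := Fin 0 → k
  r13 := 0
  r12 := 0
  r23 := 0

/-- The representation `M' = (k, 0, k)` with `ρ₁₃ = id` and the other structure maps zero. -/
def Mprep : RepQ1 k where
  V1 := Fin 1 → k
  V2 := Fin 0 → k
  V3 := Fin 1 → k
  r13 := LinearMap.id
  r12 := 0
  r23 := 0

namespace RepQ1

variable {k : Type u} [Field k]

/-- An exceptional pair `(X, Y)`: both `X` and `Y` are exceptional and
`hom (Y, X) = 0` and `ext1 (Y, X) = 0`. -/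
def IsExceptionalPair (X Y : RepQ1 k) : Prop :=
  X.IsExceptional ∧ Y.IsExceptional ∧ hom Y X = 0 ∧ ext1 Y X = 0

/-- An exceptional triple `(A, B, C)`: `(A,B)`, `(B,C)` and `(A,C)` are exceptional pairs. -/
def IsExceptionalTriple (A B C : RepQ1 k) : Prop :=
  IsExceptionalPair A B ∧ IsExceptionalPair B C ∧ IsExceptionalPair A C

/-- A morphism of representations of `Q1`. -/
structure Homo (ρ ρ' : RepQ1 k) where
  f1 : ρ.V1 →ₗ[k] ρ'.V1
  f2 : ρ.V2 →ₗ[k] ρ'.V2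
  f3 : ρ.V3 →ₗ[k] ρ'.V3
  comm13 : f3 ∘ₗ ρ.r13 = ρ'.r13 ∘ₗ f1
  comm12 : f2 ∘ₗ ρ.r12 = ρ'.r12 ∘ₗ f1
  comm23 : f3 ∘ₗ ρ.r23 = ρ'.r23 ∘ₗ f2

/-- `0 → A → C → B → 0` is a short exact sequence of representations of `Q1`:
at each vertex the induced sequence of vector spaces is short exact. -/
def IsSES {A C B : RepQ1 k} (f : Homo A C) (g : Homo C B) : Prop :=
  Function.Injective f.f1 ∧ Function.Injective f.f2 ∧ Function.Injective f.f3 ∧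
  Function.Surjective g.f1 ∧ Function.Surjective g.f2 ∧ Function.Surjective g.f3 ∧
  LinearMap.range f.f1 = LinearMap.ker g.f1 ∧
  LinearMap.range f.f2 = LinearMap.ker g.f2 ∧
  LinearMap.range f.f3 = LinearMap.ker g.f3

/-- A representation is zero when all its vector spaces are zero. -/
def IsZeroRep (ρ : RepQ1 k) : Prop :=
  Subsingleton ρ.V1 ∧ Subsingleton ρ.V2 ∧ Subsingleton ρ.V3

end RepQ1

/-- The (vertexwise) direct sum of two representations of `Q1`. -/
def RepQ1.dsum {k : Type u} [Field k] (ρ σ : RepQ1 k) : RepQ1 k where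
  V1 := ρ.V1 × σ.V1
  V2 := ρ.V2 × σ.V2
  V3 := ρ.V3 × σ.V3
  r13 := ρ.r13.prodMap σ.r13
  r12 := ρ.r12.prodMap σ.r12
  r23 := ρ.r23.prodMap σ.r23

/-!
A morphism `E₁^a → E₁^b` has `f₂ = f₃`, and the squares through `π₊` and `π₋` make the matrix of
`f₁` Toeplitz, with zero first column below the corner and zero last column above it. Such a
matrix is determined by the first `a + 1 - b` entries of its top row, so `hom ≤ a + 1 - b`.
On the other hand `hom - ext1` is the Euler form, which for `(E₁^a, E₁^b)` equals `a + 1 - b`;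
since `ext1 ≥ 0` this forces `hom = a + 1 - b` and `ext1 = b - (a + 1)`.
-/

theorem toeplitz_eq_zero {α : Type*} [Zero α] {A : ℕ → ℕ → α} {p q : ℕ}
    (shift : ∀ r c, r < p → c < q → A (r + 1) (c + 1) = A r c)
    (col : ∀ r, r < p → A (r + 1) 0 = 0)
    (row : ∀ r, r < p → A r q = 0)
    (top : ∀ c, c + p ≤ q → A 0 c = 0) {r c : ℕ} (hr : r ≤ p) (hc : c ≤ q) : A r c = 0 := by
  have diag (t : ℕ) : ∀ r c, r + t ≤ p → c + t ≤ q → A (r + t) (c + t) = A r c := by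
    induction t with
    | zero => intros; rfl
    | succ t ih =>
      intro r c hr hc
      rw [← add_assoc, ← add_assoc, shift _ _ (by omega) (by omega), ih r c (by omega) (by omega)]
  rcases lt_or_ge c r with hcr | hrc
  · obtain ⟨s, rfl⟩ := Nat.exists_eq_add_of_lt hcr
    have h := diag c (s + 1) 0 (by omega) (by omega)
    rwa [zero_add, col s (by omega), add_comm (s + 1), ← add_assoc] at h
  obtain ⟨d, rfl⟩ := Nat.exists_eq_add_of_le hrc
  rcases le_or_gt (d + p) q with hd | hd
  · have h := diag r 0 d (by omega) (by omega)
    rwa [zero_add, top d hd, add_comm d] at h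
  · rw [← diag (q - (r + d)) r (r + d) (by omega) (by omega), Nat.add_sub_cancel' hc]
    exact row _ (by omega)

theorem Matrix.eq_zero_of_toeplitz {α : Type*} [Zero α] {p q : ℕ}
    (M : Matrix (Fin (p + 1)) (Fin (q + 1)) α)
    (shift : ∀ (r : Fin p) (c : Fin q), M r.succ c.succ = M r.castSucc c.castSucc)
    (col : ∀ r : Fin p, M r.succ 0 = 0)
    (row : ∀ r : Fin p, M r.castSucc (Fin.last q) = 0)
    (top : ∀ c : Fin (q + 1), (c : ℕ) + p ≤ q → M 0 c = 0) : M = 0 := by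
  let A (r c : ℕ) : α := if h : r < p + 1 ∧ c < q + 1 then M ⟨r, h.1⟩ ⟨c, h.2⟩ else 0
  have hA (r : Fin (p + 1)) (c : Fin (q + 1)) : A r c = M r c := dif_pos ⟨r.isLt, c.isLt⟩
  ext r c
  rw [← hA]
  refine toeplitz_eq_zero (fun r c hr hc => ?_) (fun r hr => ?_) (fun r hr => ?_)
    (fun c hc => ?_) (Nat.le_of_lt_succ r.isLt) (Nat.le_of_lt_succ c.isLt)
  · exact (hA ⟨r + 1, by omega⟩ ⟨c + 1, by omega⟩).trans
      ((shift ⟨r, hr⟩ ⟨c, hc⟩).trans (hA ⟨r, by omega⟩ ⟨c, by omega⟩).symm)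
  · exact (hA ⟨r + 1, by omega⟩ 0).trans (col ⟨r, hr⟩)
  · exact (hA ⟨r, by omega⟩ (Fin.last q)).trans (row ⟨r, hr⟩)
  · exact (hA 0 ⟨c, by omega⟩).trans (top ⟨c, by omega⟩ hc)

namespace RepQ1

variable {k : Type u} [Field k]

theorem homSpace_eq_ker_phi (ρ ρ' : RepQ1 k) : homSpace ρ ρ' = LinearMap.ker (phi ρ ρ') := by
  ext f
  simp only [LinearMap.mem_ker, phi, LinearMap.coe_mk, AddHom.coe_mk, Prod.mk_eq_zero,
    sub_eq_zero]
  rfl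

theorem hom_sub_ext1 (ρ ρ' : RepQ1 k) :
    (hom ρ ρ' : ℤ) - ext1 ρ ρ' =
      finrank k ((ρ.V1 →ₗ[k] ρ'.V1) × (ρ.V2 →ₗ[k] ρ'.V2) × (ρ.V3 →ₗ[k] ρ'.V3)) -
      finrank k ((ρ.V1 →ₗ[k] ρ'.V3) × (ρ.V1 →ₗ[k] ρ'.V2) × (ρ.V2 →ₗ[k] ρ'.V3)) := by
  have := (phi ρ ρ').finrank_range_add_finrank_ker
  have := (LinearMap.range (phi ρ ρ')).finrank_quotient_add_finrank
  rw [hom, ext1, homSpace_eq_ker_phi]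
  omega

end RepQ1

open RepQ1

section E1

variable {k}

theorem hom_sub_ext1_E1 (a b : ℕ) :
    (hom (E1 k a) (E1 k b) : ℤ) - ext1 (E1 k a) (E1 k b) = a + 1 - b := by
  rw [hom_sub_ext1]
  have h1 (m : ℕ) : finrank k (E1 k m).V1 = m + 1 := finrank_fin_fun k
  have h2 (m : ℕ) : finrank k (E1 k m).V2 = m := finrank_fin_fun k
  have h3 (m : ℕ) : finrank k (E1 k m).V3 = m := finrank_fin_fun k
  simp only [finrank_prod, finrank_linearMap, h1, h2, h3]
  push_cast
  ring

@[simp]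
theorem piPlus_single_castSucc {m : ℕ} (c : Fin m) (x : k) :
    piPlus k m (Pi.single c.castSucc x) = Pi.single c x := by
  ext i
  simp [piPlus, Pi.single_apply]

@[simp]
theorem piPlus_single_last (m : ℕ) (x : k) : piPlus k m (Pi.single (Fin.last m) x) = 0 := by
  ext i
  simp [piPlus, Fin.castSucc_ne_last]

@[simp]
theorem piMinus_single_succ {m : ℕ} (c : Fin m) (x : k) :
    piMinus k m (Pi.single c.succ x) = Pi.single c x := by
  ext i
  simp [piMinus, Pi.single_apply]

@[simp]
theorem piMinus_single_zero (m : ℕ) (x : k) : piMinus k m (Pi.single 0 x) = 0 := by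
  ext i
  simp [piMinus, Fin.succ_ne_zero]

variable {a b : ℕ} {f : ((E1 k a).V1 →ₗ[k] (E1 k b).V1) × ((E1 k a).V2 →ₗ[k] (E1 k b).V2) ×
  ((E1 k a).V3 →ₗ[k] (E1 k b).V3)}

theorem fst_apply_castSucc_of_mem_homSpace_E1 (hf : f ∈ homSpace (E1 k a) (E1 k b))
    (x : Fin (a + 1) → k) (i : Fin b) :
    (f.1 x : Fin (b + 1) → k) i.castSucc = (f.2.1 (piPlus k a x) : Fin b → k) i := by
  have h3 : f.2.2 (piPlus k a x) = f.2.1 (piPlus k a x) := LinearMap.congr_fun hf.2.2 _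
  rw [← h3]
  exact (congrFun (LinearMap.congr_fun hf.1 x) i).symm

theorem fst_apply_succ_of_mem_homSpace_E1 (hf : f ∈ homSpace (E1 k a) (E1 k b))
    (x : Fin (a + 1) → k) (i : Fin b) :
    (f.1 x : Fin (b + 1) → k) i.succ = (f.2.1 (piMinus k a x) : Fin b → k) i :=
  (congrFun (LinearMap.congr_fun hf.2.1 x) i).symm

theorem eq_zero_of_mem_homSpace_E1 (hf : f ∈ homSpace (E1 k a) (E1 k b))
    (htop : ∀ c : Fin (a + 1), (c : ℕ) + b ≤ a → (f.1 (Pi.single c 1) : Fin (b + 1) → k) 0 = 0) :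
    f = 0 := by
  have hf1 : f.1 = 0 := by
    refine LinearMap.toMatrix'.map_eq_zero_iff.1 (Matrix.eq_zero_of_toeplitz
      (LinearMap.toMatrix' (f.1 : (Fin (a + 1) → k) →ₗ[k] Fin (b + 1) → k))
      (fun r c => ?_) (fun r => ?_) (fun r => ?_) htop)
    · show (f.1 (Pi.single c.succ 1) : Fin (b + 1) → k) r.succ =
        (f.1 (Pi.single c.castSucc 1) : Fin (b + 1) → k) r.castSucc
      rw [fst_apply_succ_of_mem_homSpace_E1 hf, fst_apply_castSucc_of_mem_homSpace_E1 hf,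
        piMinus_single_succ, piPlus_single_castSucc]
    · show (f.1 (Pi.single 0 1) : Fin (b + 1) → k) r.succ = 0
      rw [fst_apply_succ_of_mem_homSpace_E1 hf, piMinus_single_zero]
      exact congrFun (map_zero f.2.1) r
    · show (f.1 (Pi.single (Fin.last a) 1) : Fin (b + 1) → k) r.castSucc = 0
      rw [fst_apply_castSucc_of_mem_homSpace_E1 hf, piPlus_single_last]
      exact congrFun (map_zero f.2.1) r
  have hf2 : f.2.1 = 0 := by
    refine LinearMap.pi_ext fun c x => funext fun i => ?_
    have h := fst_apply_castSucc_of_mem_homSpace_E1 hf (Pi.single c.castSucc x) i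
    rw [hf1, piPlus_single_castSucc] at h
    exact h.symm
  have hf3 : f.2.2 = f.2.1 := LinearMap.ext (LinearMap.congr_fun hf.2.2)
  exact Prod.ext hf1 (Prod.ext hf2 (hf3.trans hf2))

theorem hom_E1_le (a b : ℕ) : hom (E1 k a) (E1 k b) ≤ a + 1 - b := by
  let topRow : homSpace (E1 k a) (E1 k b) →ₗ[k] (Fin (a + 1 - b) → k) :=
    { toFun f d := (f.1.1 (Pi.single (Fin.castLE (by omega) d) 1) : Fin (b + 1) → k) 0
      map_add' _ _ := rfl
      map_smul' _ _ := rfl }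
  have h_inj : Function.Injective topRow := (injective_iff_map_eq_zero topRow).2 fun f hf =>
    Subtype.ext <| eq_zero_of_mem_homSpace_E1 f.2 fun c hc => congrFun hf ⟨c, by omega⟩
  simpa [hom] using LinearMap.finrank_le_finrank_of_injective h_inj

theorem hom_E1 (a b : ℕ) : hom (E1 k a) (E1 k b) = a + 1 - b := by
  have := hom_sub_ext1_E1 (k := k) a b
  have := hom_E1_le (k := k) a b
  omega

theorem ext1_E1 (a b : ℕ) : ext1 (E1 k a) (E1 k b) = b - (a + 1) := by
  have := hom_sub_ext1_E1 (k := k) a b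
  have := hom_E1_le (k := k) a b
  omega

end E1

theorem statement_2_general (k : Type u) [Field k] (m n : ℕ) (hmn : m < n) :
    RepQ1.hom (E1 k m) (E1 k n) = 0 ∧
    RepQ1.ext1 (E1 k m) (E1 k n) = n - m - 1 ∧
    RepQ1.hom (E1 k n) (E1 k m) = 1 + n - m ∧
    RepQ1.ext1 (E1 k n) (E1 k m) = 0 := by
  simp only [hom_E1, ext1_E1]
  omega

/-- `hom`/`ext1` dimensions between `E₁^m` and `E₁^n` for `m < n`. -/
theorem statement_2 (k : Type u) [Field k] [IsAlgClosed k] (m n : ℕ) (hmn : m < n) :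
    RepQ1.hom (E1 k m) (E1 k n) = 0 ∧
    RepQ1.ext1 (E1 k m) (E1 k n) = n - m - 1 ∧
    RepQ1.hom (E1 k n) (E1 k m) = 1 + n - m ∧
    RepQ1.ext1 (E1 k n) (E1 k m) = 0 :=
  statement_2_general k m n hmn
end
end

section
/- For all natural numbers m ≥ 0: hom(M, E_1^m) = 0, ext1(M, E_1^m) = 0, hom(E_1^m, M) = 0, ext1(E_1^m, M) = 1; hom(M, E_2^m) = 0, ext1(M, E_2^m) = 0, hom(E_2^m, M) = 1, ext1(E_2^m, M) = 0; hom(M, E_3^m) = 0, ext1(M, E_3^m) = 1, hom(E_3^m, M) = 0, ext1(E_3^m, M) = 0; hom(M, E_4^m) = 1, ext1(M, E_4^m) = 0, hom(E_4^m, M) = 0, ext1(E_4^m, M) = 0; hom(M', E_1^m) = 1, ext1(M', E_1^m) = 0, hom(E_1^m, M') = 0, ext1(E_1^m, M') = 0; hom(M', E_2^m) = 0, ext1(M', E_2^m) = 1, hom(E_2^m, M') = 0, ext1(E_2^m, M') = 0; hom(M', E_3^m) = 0, ext1(M', E_3^m) = 0, hom(E_3^m, M') = 1, ext1(E_3^m,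 M') = 0; hom(M', E_4^m) = 0, ext1(M', E_4^m) = 0, hom(E_4^m, M') = 0, ext1(E_4^m, M') = 1. Moreover hom(M, M') = 0, ext1(M, M') = 1, hom(M', M) = 0, and ext1(M', M) = 1. -/
noncomputable section

open Module

universe u

variable (k : Type u) [Field k]

/-!
A morphism between `M` (supported at vertex 2) or `M'` (the identity `k → k` on the arrow
`1 → 3`) and a representation `ρ` is a single linear map constrained by one structure map of
`ρ`, so `hom(M, ρ) = dim ker ρ₂₃`, `hom(ρ, M) = dim coker ρ₁₂`, `hom(M', ρ) = dim ker ρ₁₂`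
and `hom(ρ, M') = dim coker ρ₂₃`. Since `hom - ext1` is the Euler form of the dimension
vectors, rank–nullity turns each of these into the complementary formula for `ext1`:
`ext1(M, ρ) = dim coker ρ₂₃`, `ext1(ρ, M) = dim ker ρ₁₂`, `ext1(M', ρ) = dim coker ρ₁₂`,
`ext1(ρ, M') = dim ker ρ₂₃`. For `Eᵢ^m` the maps `ρ₁₂`, `ρ₂₃` are `id`, `π₋^m` (surjective
with a line as kernel) or `j₋^m` (injective with a line as cokernel).
-/

section LinearAlgebra

variable {k U V W N : Type*} [Field k] [AddCommGroup U] [Module k U] [AddCommGroup V]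
  [Module k V] [AddCommGroup W] [Module k W] [AddCommGroup N] [Module k N]

lemma Submodule.finrank_map_of_disjoint_ker {S : Submodule k V} (f : V →ₗ[k] W)
    (hf : Disjoint S (LinearMap.ker f)) : finrank k (S.map f) = finrank k S := by
  have hinj : Function.Injective (f ∘ₗ S.subtype) := by
    rw [← LinearMap.ker_eq_bot, LinearMap.ker_eq_bot']
    exact fun x hx => Subtype.ext (LinearMap.disjoint_ker.1 hf x x.2 hx)
  rw [(LinearEquiv.ofInjective _ hinj).finrank_eq, LinearMap.range_comp,
    Submodule.range_subtype]

lemma LinearMap.range_compRight_subtype_ker (f : V →ₗ[k] W) :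
    range ((ker f).subtype.compRight k (M := U)) = ker (f.compRight k (M := U)) := by
  ext g
  simp only [mem_range, mem_ker, compRight_apply]
  constructor
  · rintro ⟨h, rfl⟩
    ext x
    simp
  · intro hg
    exact ⟨g.codRestrict _ fun x => LinearMap.congr_fun hg x, subtype_comp_codRestrict ..⟩

lemma LinearMap.finrank_ker_compRight [FiniteDimensional k U] [FiniteDimensional k V]
    (f : V →ₗ[k] W) :
    finrank k (ker (f.compRight k (M := U))) = finrank k U * finrank k (ker f) := by
  rw [← range_compRight_subtype_ker, finrank_range_of_inj
    (Subtype.val_injective.injective_linearMapComp_left), Module.finrank_linearMap]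

lemma LinearMap.finrank_ker_lcomp [FiniteDimensional k W] [FiniteDimensional k N]
    (f : V →ₗ[k] W) :
    finrank k (ker (lcomp k N f)) = finrank k (W ⧸ range f) * finrank k N := by
  have hexact := exact_lcomp_of_exact_of_surjective N (exact_map_mkQ_range f)
    (Submodule.mkQ_surjective _)
  rw [exact_iff.mp hexact, finrank_range_of_inj (lcomp_injective_of_surjective _
    (Submodule.mkQ_surjective _)), Module.finrank_linearMap]

variable {f : V →ₗ[k] W}

lemma LinearMap.finrank_ker_of_injective (hf : Function.Injective f) :
    finrank k (ker f) = 0 := by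
  rw [ker_eq_bot_of_injective hf, finrank_bot]

lemma LinearMap.finrank_coker_of_surjective (hf : Function.Surjective f) :
    finrank k (W ⧸ range f) = 0 := by
  rw [range_eq_top.2 hf]
  exact finrank_zero_of_subsingleton

lemma LinearMap.finrank_ker_add_finrank_of_surjective [FiniteDimensional k V]
    (hf : Function.Surjective f) : finrank k (ker f) + finrank k W = finrank k V := by
  rw [← f.finrank_range_add_finrank_ker, range_eq_top.2 hf, finrank_top, add_comm]

lemma LinearMap.finrank_coker_add_finrank_of_injective [FiniteDimensional k W]
    (hf : Function.Injective f) : finrank k (W ⧸ range f) + finrank k V = finrank k W := by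
  rw [← finrank_range_of_inj hf, (range f).finrank_quotient_add_finrank]

lemma LinearMap.finrank_coker_of_subsingleton [Subsingleton V] [FiniteDimensional k W] :
    finrank k (W ⧸ range f) = finrank k W := by
  simpa [finrank_zero_of_subsingleton (M := V)] using
    finrank_coker_add_finrank_of_injective (Function.injective_of_subsingleton f)

end LinearAlgebra

namespace RepQ1

variable {k : Type u} [Field k]

lemma mem_homSpace {ρ ρ' : RepQ1 k}
    {f : (ρ.V1 →ₗ[k] ρ'.V1) × (ρ.V2 →ₗ[k] ρ'.V2) × (ρ.V3 →ₗ[k] ρ'.V3)} :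
    f ∈ homSpace ρ ρ' ↔ f.2.2 ∘ₗ ρ.r13 = ρ'.r13 ∘ₗ f.1 ∧
      f.2.1 ∘ₗ ρ.r12 = ρ'.r12 ∘ₗ f.1 ∧ f.2.2 ∘ₗ ρ.r23 = ρ'.r23 ∘ₗ f.2.1 :=
  Iff.rfl

lemma ker_phi (ρ ρ' : RepQ1 k) : LinearMap.ker (phi ρ ρ') = homSpace ρ ρ' := by
  ext f
  simp only [LinearMap.mem_ker, mem_homSpace, phi, LinearMap.coe_mk, AddHom.coe_mk,
    Prod.mk_eq_zero, sub_eq_zero]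

lemma ext1_add_eq_hom_add (ρ ρ' : RepQ1 k) :
    ext1 ρ ρ' + (finrank k ρ.V1 * finrank k ρ'.V1 + finrank k ρ.V2 * finrank k ρ'.V2
      + finrank k ρ.V3 * finrank k ρ'.V3)
    = hom ρ ρ' + (finrank k ρ.V1 * finrank k ρ'.V3 + finrank k ρ.V1 * finrank k ρ'.V2
      + finrank k ρ.V2 * finrank k ρ'.V3) := by
  have hker := LinearMap.finrank_range_add_finrank_ker (phi ρ ρ')
  have hcoker := Submodule.finrank_quotient_add_finrank (LinearMap.range (phi ρ ρ'))
  rw [ker_phi] at hker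
  simp only [Module.finrank_prod, Module.finrank_linearMap] at hker hcoker
  unfold ext1 hom
  omega

section SupportedAtTwo

variable (σ ρ : RepQ1 k) [Subsingleton σ.V1] [Subsingleton σ.V3]

lemma hom_eq_finrank_mul_finrank_ker_r23 :
    hom σ ρ = finrank k σ.V2 * finrank k (LinearMap.ker ρ.r23) := by
  have hmap : (homSpace σ ρ).map (LinearMap.fst k _ _ ∘ₗ LinearMap.snd k _ _) =
      LinearMap.ker (ρ.r23.compRight k (M := σ.V2)) := by
    ext g
    simp only [Submodule.mem_map, LinearMap.mem_ker, LinearMap.compRight_apply]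
    constructor
    · rintro ⟨⟨f1, f2, f3⟩, ⟨-, -, h23⟩, rfl⟩
      change ρ.r23 ∘ₗ f2 = 0
      rw [← h23, Subsingleton.elim f3 0, LinearMap.zero_comp]
    · intro hg
      refine ⟨(0, g, 0), ⟨?_, ?_, ?_⟩, rfl⟩
      · exact Subsingleton.elim _ _
      · exact Subsingleton.elim _ _
      · simp [hg]
  rw [hom, ← LinearMap.finrank_ker_compRight, ← hmap]
  refine (Submodule.finrank_map_of_disjoint_ker _ <| LinearMap.disjoint_ker.2
    fun f _ hf => ?_).symm
  obtain ⟨f1, f2, f3⟩ := f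
  change f2 = 0 at hf
  simp [hf, Subsingleton.elim f1 0, Subsingleton.elim f3 0]

lemma hom_eq_finrank_coker_r12_mul_finrank :
    hom ρ σ = finrank k (ρ.V2 ⧸ LinearMap.range ρ.r12) * finrank k σ.V2 := by
  have hmap : (homSpace ρ σ).map (LinearMap.fst k _ _ ∘ₗ LinearMap.snd k _ _) =
      LinearMap.ker (LinearMap.lcomp k σ.V2 ρ.r12) := by
    ext g
    simp only [Submodule.mem_map, LinearMap.mem_ker, LinearMap.lcomp_apply']
    constructor
    · rintro ⟨⟨f1, f2, f3⟩, ⟨-, h12, -⟩, rfl⟩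
      change f2 ∘ₗ ρ.r12 = 0
      rw [h12, Subsingleton.elim f1 0, LinearMap.comp_zero]
    · intro hg
      refine ⟨(0, g, 0), ⟨?_, ?_, ?_⟩, rfl⟩
      · exact Subsingleton.elim _ _
      · simp [hg]
      · exact Subsingleton.elim _ _
  rw [hom, ← LinearMap.finrank_ker_lcomp, ← hmap]
  refine (Submodule.finrank_map_of_disjoint_ker _ <| LinearMap.disjoint_ker.2
    fun f _ hf => ?_).symm
  obtain ⟨f1, f2, f3⟩ := f
  change f2 = 0 at hf
  simp [hf, Subsingleton.elim f1 0, Subsingleton.elim f3 0]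

lemma ext1_eq_finrank_mul_finrank_coker_r23 :
    ext1 σ ρ = finrank k σ.V2 * finrank k (ρ.V3 ⧸ LinearMap.range ρ.r23) := by
  have euler := ext1_add_eq_hom_add σ ρ
  have hker := LinearMap.finrank_range_add_finrank_ker ρ.r23
  have hcoker := Submodule.finrank_quotient_add_finrank (LinearMap.range ρ.r23)
  rw [hom_eq_finrank_mul_finrank_ker_r23, finrank_zero_of_subsingleton (M := σ.V1),
    finrank_zero_of_subsingleton (M := σ.V3), ← hker, ← hcoker] at euler
  linarith

lemma ext1_eq_finrank_ker_r12_mul_finrank :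
    ext1 ρ σ = finrank k (LinearMap.ker ρ.r12) * finrank k σ.V2 := by
  have euler := ext1_add_eq_hom_add ρ σ
  have hker := LinearMap.finrank_range_add_finrank_ker ρ.r12
  have hcoker := Submodule.finrank_quotient_add_finrank (LinearMap.range ρ.r12)
  rw [hom_eq_finrank_coker_r12_mul_finrank, finrank_zero_of_subsingleton (M := σ.V1),
    finrank_zero_of_subsingleton (M := σ.V3), ← hker, ← hcoker] at euler
  linarith

end SupportedAtTwo

section DiagonalOnOneThree

variable (σ ρ : RepQ1 k) [Subsingleton σ.V2]

lemma hom_eq_finrank_mul_finrank_ker_r12 (hσ : Function.Bijective σ.r13) :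
    hom σ ρ = finrank k σ.V1 * finrank k (LinearMap.ker ρ.r12) := by
  let e := LinearEquiv.ofBijective σ.r13 hσ
  have hmap : (homSpace σ ρ).map (LinearMap.fst k _ _) =
      LinearMap.ker (ρ.r12.compRight k (M := σ.V1)) := by
    ext g
    simp only [Submodule.mem_map, LinearMap.mem_ker, LinearMap.compRight_apply]
    constructor
    · rintro ⟨⟨f1, f2, f3⟩, ⟨-, h12, -⟩, rfl⟩
      change ρ.r12 ∘ₗ f1 = 0
      rw [← h12, Subsingleton.elim f2 0, LinearMap.zero_comp]
    · intro hg
      refine ⟨(g, 0, ρ.r13 ∘ₗ g ∘ₗ e.symm.toLinearMap), ⟨?_, ?_, ?_⟩, rfl⟩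
      · ext x
        simp [e]
      · simp [hg]
      · exact Subsingleton.elim _ _
  rw [hom, ← LinearMap.finrank_ker_compRight, ← hmap]
  refine (Submodule.finrank_map_of_disjoint_ker _ <| LinearMap.disjoint_ker.2
    fun f hf hf1 => ?_).symm
  obtain ⟨f1, f2, f3⟩ := f
  obtain ⟨h13, -, -⟩ := hf
  change f1 = 0 at hf1
  subst hf1
  have hf3 : f3 = 0 := (LinearMap.cancel_right hσ.2).1 (by simpa using h13)
  simp [hf3, Subsingleton.elim f2 0]

lemma hom_eq_finrank_coker_r23_mul_finrank (hσ : Function.Bijective σ.r13) :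
    hom ρ σ = finrank k (ρ.V3 ⧸ LinearMap.range ρ.r23) * finrank k σ.V3 := by
  let e := LinearEquiv.ofBijective σ.r13 hσ
  have hmap : (homSpace ρ σ).map (LinearMap.snd k _ _ ∘ₗ LinearMap.snd k _ _) =
      LinearMap.ker (LinearMap.lcomp k σ.V3 ρ.r23) := by
    ext g
    simp only [Submodule.mem_map, LinearMap.mem_ker, LinearMap.lcomp_apply']
    constructor
    · rintro ⟨⟨f1, f2, f3⟩, ⟨-, -, h23⟩, rfl⟩
      change f3 ∘ₗ ρ.r23 = 0
      rw [h23, Subsingleton.elim f2 0, LinearMap.comp_zero]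
    · intro hg
      refine ⟨(e.symm.toLinearMap ∘ₗ g ∘ₗ ρ.r13, 0, g), ⟨?_, ?_, ?_⟩, rfl⟩
      · ext x
        simp [e]
      · exact Subsingleton.elim _ _
      · simp [hg]
  rw [hom, ← LinearMap.finrank_ker_lcomp, ← hmap]
  refine (Submodule.finrank_map_of_disjoint_ker _ <| LinearMap.disjoint_ker.2
    fun f hf hf3 => ?_).symm
  obtain ⟨f1, f2, f3⟩ := f
  obtain ⟨h13, -, -⟩ := hf
  change f3 = 0 at hf3
  subst hf3
  have hf1 : f1 = 0 := (LinearMap.cancel_left hσ.1).1 (by simpa using h13.symm)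
  simp [hf1, Subsingleton.elim f2 0]

lemma ext1_eq_finrank_mul_finrank_coker_r12 (hσ : Function.Bijective σ.r13) :
    ext1 σ ρ = finrank k σ.V1 * finrank k (ρ.V2 ⧸ LinearMap.range ρ.r12) := by
  have euler := ext1_add_eq_hom_add σ ρ
  have hker := LinearMap.finrank_range_add_finrank_ker ρ.r12
  have hcoker := Submodule.finrank_quotient_add_finrank (LinearMap.range ρ.r12)
  rw [hom_eq_finrank_mul_finrank_ker_r12 σ ρ hσ, finrank_zero_of_subsingleton (M := σ.V2),
    ← (LinearEquiv.ofBijective σ.r13 hσ).finrank_eq, ← hker, ← hcoker] at euler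
  linarith

lemma ext1_eq_finrank_ker_r23_mul_finrank (hσ : Function.Bijective σ.r13) :
    ext1 ρ σ = finrank k (LinearMap.ker ρ.r23) * finrank k σ.V3 := by
  have euler := ext1_add_eq_hom_add ρ σ
  have hker := LinearMap.finrank_range_add_finrank_ker ρ.r23
  have hcoker := Submodule.finrank_quotient_add_finrank (LinearMap.range ρ.r23)
  rw [hom_eq_finrank_coker_r23_mul_finrank σ ρ hσ, finrank_zero_of_subsingleton (M := σ.V2),
    (LinearEquiv.ofBijective σ.r13 hσ).finrank_eq, ← hker, ← hcoker] at euler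
  linarith

end DiagonalOnOneThree

end RepQ1

instance : Subsingleton (Mrep k).V1 := inferInstanceAs (Subsingleton (Fin 0 → k))
instance : Subsingleton (Mrep k).V3 := inferInstanceAs (Subsingleton (Fin 0 → k))
instance : Subsingleton (Mprep k).V2 := inferInstanceAs (Subsingleton (Fin 0 → k))

namespace RepQ1

variable {k : Type u} [Field k] (ρ : RepQ1 k)

lemma Mprep_r13_bijective : Function.Bijective (Mprep k).r13 := Function.bijective_id

lemma hom_Mrep_left : hom (Mrep k) ρ = finrank k (LinearMap.ker ρ.r23) := by
  rw [hom_eq_finrank_mul_finrank_ker_r23, Mrep, finrank_fin_fun, one_mul]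

lemma ext1_Mrep_left : ext1 (Mrep k) ρ = finrank k (ρ.V3 ⧸ LinearMap.range ρ.r23) := by
  rw [ext1_eq_finrank_mul_finrank_coker_r23, Mrep, finrank_fin_fun, one_mul]

lemma hom_Mrep_right : hom ρ (Mrep k) = finrank k (ρ.V2 ⧸ LinearMap.range ρ.r12) := by
  rw [hom_eq_finrank_coker_r12_mul_finrank, Mrep, finrank_fin_fun, mul_one]

lemma ext1_Mrep_right : ext1 ρ (Mrep k) = finrank k (LinearMap.ker ρ.r12) := by
  rw [ext1_eq_finrank_ker_r12_mul_finrank, Mrep, finrank_fin_fun, mul_one]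

lemma hom_Mprep_left : hom (Mprep k) ρ = finrank k (LinearMap.ker ρ.r12) := by
  rw [hom_eq_finrank_mul_finrank_ker_r12 _ _ Mprep_r13_bijective, Mprep, finrank_fin_fun,
    one_mul]

lemma ext1_Mprep_left : ext1 (Mprep k) ρ = finrank k (ρ.V2 ⧸ LinearMap.range ρ.r12) := by
  rw [ext1_eq_finrank_mul_finrank_coker_r12 _ _ Mprep_r13_bijective, Mprep, finrank_fin_fun,
    one_mul]

lemma hom_Mprep_right : hom ρ (Mprep k) = finrank k (ρ.V3 ⧸ LinearMap.range ρ.r23) := by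
  rw [hom_eq_finrank_coker_r23_mul_finrank _ _ Mprep_r13_bijective, Mprep, finrank_fin_fun,
    mul_one]

lemma ext1_Mprep_right : ext1 ρ (Mprep k) = finrank k (LinearMap.ker ρ.r23) := by
  rw [ext1_eq_finrank_ker_r23_mul_finrank _ _ Mprep_r13_bijective, Mprep, finrank_fin_fun,
    mul_one]

end RepQ1

section Shifts

variable (m : ℕ)

lemma piMinus_jMinus (a : Fin m → k) : piMinus k m (jMinus k m a) = a := rfl

lemma piMinus_surjective : Function.Surjective (piMinus k m) :=
  Function.LeftInverse.surjective (piMinus_jMinus k m)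

lemma jMinus_injective : Function.Injective (jMinus k m) :=
  Function.LeftInverse.injective (piMinus_jMinus k m)

lemma finrank_ker_piMinus : finrank k (LinearMap.ker (piMinus k m)) = 1 := by
  have := LinearMap.finrank_ker_add_finrank_of_surjective (piMinus_surjective k m)
  rw [finrank_fin_fun, finrank_fin_fun] at this
  omega

lemma finrank_coker_jMinus :
    finrank k ((Fin (m + 1) → k) ⧸ LinearMap.range (jMinus k m)) = 1 := by
  have := LinearMap.finrank_coker_add_finrank_of_injective (jMinus_injective k m)
  rw [finrank_fin_fun, finrank_fin_fun] at this
  omega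

end Shifts

section KernelsAndCokernels

variable (m : ℕ)

lemma finrank_ker_coker_E1 :
    finrank k (LinearMap.ker (E1 k m).r12) = 1 ∧
      finrank k ((E1 k m).V2 ⧸ LinearMap.range (E1 k m).r12) = 0 ∧
      finrank k (LinearMap.ker (E1 k m).r23) = 0 ∧
      finrank k ((E1 k m).V3 ⧸ LinearMap.range (E1 k m).r23) = 0 :=
  ⟨finrank_ker_piMinus k m, LinearMap.finrank_coker_of_surjective (piMinus_surjective k m),
    LinearMap.finrank_ker_of_injective Function.injective_id,
    LinearMap.finrank_coker_of_surjective Function.surjective_id⟩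

lemma finrank_ker_coker_E2 :
    finrank k (LinearMap.ker (E2 k m).r12) = 0 ∧
      finrank k ((E2 k m).V2 ⧸ LinearMap.range (E2 k m).r12) = 1 ∧
      finrank k (LinearMap.ker (E2 k m).r23) = 0 ∧
      finrank k ((E2 k m).V3 ⧸ LinearMap.range (E2 k m).r23) = 0 :=
  ⟨LinearMap.finrank_ker_of_injective (jMinus_injective k m), finrank_coker_jMinus k m,
    LinearMap.finrank_ker_of_injective Function.injective_id,
    LinearMap.finrank_coker_of_surjective Function.surjective_id⟩

lemma finrank_ker_coker_E3 :
    finrank k (LinearMap.ker (E3 k m).r12) = 0 ∧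
      finrank k ((E3 k m).V2 ⧸ LinearMap.range (E3 k m).r12) = 0 ∧
      finrank k (LinearMap.ker (E3 k m).r23) = 0 ∧
      finrank k ((E3 k m).V3 ⧸ LinearMap.range (E3 k m).r23) = 1 :=
  ⟨LinearMap.finrank_ker_of_injective Function.injective_id,
    LinearMap.finrank_coker_of_surjective Function.surjective_id,
    LinearMap.finrank_ker_of_injective (jMinus_injective k m), finrank_coker_jMinus k m⟩

lemma finrank_ker_coker_E4 :
    finrank k (LinearMap.ker (E4 k m).r12) = 0 ∧
      finrank k ((E4 k m).V2 ⧸ LinearMap.range (E4 k m).r12) = 0 ∧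
      finrank k (LinearMap.ker (E4 k m).r23) = 1 ∧
      finrank k ((E4 k m).V3 ⧸ LinearMap.range (E4 k m).r23) = 0 :=
  ⟨LinearMap.finrank_ker_of_injective Function.injective_id,
    LinearMap.finrank_coker_of_surjective Function.surjective_id,
    finrank_ker_piMinus k m, LinearMap.finrank_coker_of_surjective (piMinus_surjective k m)⟩

lemma finrank_ker_coker_Mprep_r23 :
    finrank k (LinearMap.ker (Mprep k).r23) = 0 ∧
      finrank k ((Mprep k).V3 ⧸ LinearMap.range (Mprep k).r23) = 1 :=
  ⟨LinearMap.finrank_ker_of_injective (Function.injective_of_subsingleton _),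
    LinearMap.finrank_coker_of_subsingleton.trans (finrank_fin_fun k)⟩

lemma finrank_ker_coker_Mrep_r12 :
    finrank k (LinearMap.ker (Mrep k).r12) = 0 ∧
      finrank k ((Mrep k).V2 ⧸ LinearMap.range (Mrep k).r12) = 1 :=
  ⟨LinearMap.finrank_ker_of_injective (Function.injective_of_subsingleton _),
    LinearMap.finrank_coker_of_subsingleton.trans (finrank_fin_fun k)⟩

end KernelsAndCokernels

theorem statement_5_general (k : Type u) [Field k] :
    (∀ m : ℕ,
      RepQ1.hom (Mrep k) (E1 k m) = 0 ∧ RepQ1.ext1 (Mrep k) (E1 k m) = 0 ∧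
      RepQ1.hom (E1 k m) (Mrep k) = 0 ∧ RepQ1.ext1 (E1 k m) (Mrep k) = 1 ∧
      RepQ1.hom (Mrep k) (E2 k m) = 0 ∧ RepQ1.ext1 (Mrep k) (E2 k m) = 0 ∧
      RepQ1.hom (E2 k m) (Mrep k) = 1 ∧ RepQ1.ext1 (E2 k m) (Mrep k) = 0 ∧
      RepQ1.hom (Mrep k) (E3 k m) = 0 ∧ RepQ1.ext1 (Mrep k) (E3 k m) = 1 ∧
      RepQ1.hom (E3 k m) (Mrep k) = 0 ∧ RepQ1.ext1 (E3 k m) (Mrep k) = 0 ∧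
      RepQ1.hom (Mrep k) (E4 k m) = 1 ∧ RepQ1.ext1 (Mrep k) (E4 k m) = 0 ∧
      RepQ1.hom (E4 k m) (Mrep k) = 0 ∧ RepQ1.ext1 (E4 k m) (Mrep k) = 0 ∧
      RepQ1.hom (Mprep k) (E1 k m) = 1 ∧ RepQ1.ext1 (Mprep k) (E1 k m) = 0 ∧
      RepQ1.hom (E1 k m) (Mprep k) = 0 ∧ RepQ1.ext1 (E1 k m) (Mprep k) = 0 ∧
      RepQ1.hom (Mprep k) (E2 k m) = 0 ∧ RepQ1.ext1 (Mprep k) (E2 k m) = 1 ∧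
      RepQ1.hom (E2 k m) (Mprep k) = 0 ∧ RepQ1.ext1 (E2 k m) (Mprep k) = 0 ∧
      RepQ1.hom (Mprep k) (E3 k m) = 0 ∧ RepQ1.ext1 (Mprep k) (E3 k m) = 0 ∧
      RepQ1.hom (E3 k m) (Mprep k) = 1 ∧ RepQ1.ext1 (E3 k m) (Mprep k) = 0 ∧
      RepQ1.hom (Mprep k) (E4 k m) = 0 ∧ RepQ1.ext1 (Mprep k) (E4 k m) = 0 ∧
      RepQ1.hom (E4 k m) (Mprep k) = 0 ∧ RepQ1.ext1 (E4 k m) (Mprep k) = 1) ∧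
    RepQ1.hom (Mrep k) (Mprep k) = 0 ∧ RepQ1.ext1 (Mrep k) (Mprep k) = 1 ∧
    RepQ1.hom (Mprep k) (Mrep k) = 0 ∧ RepQ1.ext1 (Mprep k) (Mrep k) = 1 := by
  refine ⟨fun m => ?_, ?_⟩
  · simp only [RepQ1.hom_Mrep_left, RepQ1.ext1_Mrep_left, RepQ1.hom_Mrep_right,
      RepQ1.ext1_Mrep_right, RepQ1.hom_Mprep_left, RepQ1.ext1_Mprep_left,
      RepQ1.hom_Mprep_right, RepQ1.ext1_Mprep_right, finrank_ker_coker_E1,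
      finrank_ker_coker_E2, finrank_ker_coker_E3, finrank_ker_coker_E4, and_self]
  · simp only [RepQ1.hom_Mrep_left, RepQ1.ext1_Mrep_left, RepQ1.hom_Mprep_left,
      RepQ1.ext1_Mprep_left, finrank_ker_coker_Mprep_r23, finrank_ker_coker_Mrep_r12, and_self]

/-- `hom`/`ext1` dimensions between `M`, `M'` and the exceptional objects `Eᵢ^m` of `Q1`. -/
theorem statement_5 (k : Type u) [Field k] [IsAlgClosed k] :
    (∀ m : ℕ,
      RepQ1.hom (Mrep k) (E1 k m) = 0 ∧ RepQ1.ext1 (Mrep k) (E1 k m) = 0 ∧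
      RepQ1.hom (E1 k m) (Mrep k) = 0 ∧ RepQ1.ext1 (E1 k m) (Mrep k) = 1 ∧
      RepQ1.hom (Mrep k) (E2 k m) = 0 ∧ RepQ1.ext1 (Mrep k) (E2 k m) = 0 ∧
      RepQ1.hom (E2 k m) (Mrep k) = 1 ∧ RepQ1.ext1 (E2 k m) (Mrep k) = 0 ∧
      RepQ1.hom (Mrep k) (E3 k m) = 0 ∧ RepQ1.ext1 (Mrep k) (E3 k m) = 1 ∧
      RepQ1.hom (E3 k m) (Mrep k) = 0 ∧ RepQ1.ext1 (E3 k m) (Mrep k) = 0 ∧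
      RepQ1.hom (Mrep k) (E4 k m) = 1 ∧ RepQ1.ext1 (Mrep k) (E4 k m) = 0 ∧
      RepQ1.hom (E4 k m) (Mrep k) = 0 ∧ RepQ1.ext1 (E4 k m) (Mrep k) = 0 ∧
      RepQ1.hom (Mprep k) (E1 k m) = 1 ∧ RepQ1.ext1 (Mprep k) (E1 k m) = 0 ∧
      RepQ1.hom (E1 k m) (Mprep k) = 0 ∧ RepQ1.ext1 (E1 k m) (Mprep k) = 0 ∧
      RepQ1.hom (Mprep k) (E2 k m) = 0 ∧ RepQ1.ext1 (Mprep k) (E2 k m) = 1 ∧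
      RepQ1.hom (E2 k m) (Mprep k) = 0 ∧ RepQ1.ext1 (E2 k m) (Mprep k) = 0 ∧
      RepQ1.hom (Mprep k) (E3 k m) = 0 ∧ RepQ1.ext1 (Mprep k) (E3 k m) = 0 ∧
      RepQ1.hom (E3 k m) (Mprep k) = 1 ∧ RepQ1.ext1 (E3 k m) (Mprep k) = 0 ∧
      RepQ1.hom (Mprep k) (E4 k m) = 0 ∧ RepQ1.ext1 (Mprep k) (E4 k m) = 0 ∧
      RepQ1.hom (E4 k m) (Mprep k) = 0 ∧ RepQ1.ext1 (E4 k m) (Mprep k) = 1) ∧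
    RepQ1.hom (Mrep k) (Mprep k) = 0 ∧ RepQ1.ext1 (Mrep k) (Mprep k) = 1 ∧
    RepQ1.hom (Mprep k) (Mrep k) = 0 ∧ RepQ1.ext1 (Mprep k) (Mrep k) = 1 :=
  statement_5_general k
end
end

section
/- If X and Y are exceptional representations of the quiver Q1 with ext1(X,Y) ≠ 0 and ext1(Y,X) ≠ 0, then either X ≅ M and Y ≅ M', or X ≅ M' and Y ≅ M. In other words, {M, M'} is the unique Ext-nontrivial couple of exceptional representations of Q1. -/
noncomputable section

open Module

universe u

variable (k : Type u) [Field k]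

/-!
For an exceptional `X` the Euler form gives `q(dim X) = hom X X - ext1 X X = 1`, so `dim X` is one
of `(m+1, m, m)`, `(m, m+1, m+1)`, `(m, m, m+1)`, `(m+1, m+1, m)`, `(m, m+1, m)`, `(m+1, m, m+1)`.
As every endomorphism of `X` is scalar, the last two shapes force `X ≅ M` and `X ≅ M'`, and in the
first four an arrow at vertex `2` is invertible and the remaining Kronecker pair is a brick, hence
pencil-surjective (preinjective `X`) or pencil-injective (preprojective `X`).

Through the trace pairing, `Ext¹(X, Y)` is dual to triples `(A, B, C)` subject to three linear
relations. For preprojective `X` and `Y` such a triple gives a nonzero morphism of Kronecker pairs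
out of a pencil-injective pair of dimension `(n, n + 1)`, which must be injective; this forces
`dim Y₁ < dim X₁`, so `Ext¹` cannot be nonzero both ways. Preinjectives are handled by duality, and
from a preprojective to a preinjective the triple would give a subspace `Z ≠ 0` with `a Z = b Z`,
impossible since `b⁻¹ a` has an eigenvector on `Z` (`k` is algebraically closed). Finally, if
`X ≅ M` then `Ext¹ ≠ 0` both ways forces `r12` of `Y` to have a kernel and `r23` a cokernel, which
makes `Y ≅ M'`.
-/

variable {k}

open Function
open LinearMap (ker range)

section LinearAlgebra

variable {V W : Type*} [AddCommGroup V] [Module k V] [AddCommGroup W] [Module k W]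

theorem LinearMap.eq_zero_of_forall_trace_comp_eq_zero [FiniteDimensional k V] {C : W →ₗ[k] V}
    (h : ∀ θ : V →ₗ[k] W, LinearMap.trace k V (C ∘ₗ θ) = 0) : C = 0 := by
  ext w
  refine (Module.forall_dual_apply_eq_zero_iff k (C w)).mp fun ψ => ?_
  have hθ : C ∘ₗ ψ.smulRight w = ψ.smulRight (C w) := by ext; simp
  simpa [hθ] using h (ψ.smulRight w)

theorem LinearMap.exists_trace_comp_eq [FiniteDimensional k V] [FiniteDimensional k W]
    (ζ : Module.Dual k (V →ₗ[k] W)) :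
    ∃ C : W →ₗ[k] V, ∀ θ, LinearMap.trace k V (C ∘ₗ θ) = ζ θ := by
  let pairing : (W →ₗ[k] V) →ₗ[k] Module.Dual k (V →ₗ[k] W) :=
    (LinearMap.llcomp k V W V).compr₂ (LinearMap.trace k V)
  have hinj : Injective pairing := by
    rw [← LinearMap.ker_eq_bot, LinearMap.ker_eq_bot']
    exact fun C hC => eq_zero_of_forall_trace_comp_eq_zero fun θ => LinearMap.congr_fun hC θ
  have hdim : finrank k (W →ₗ[k] V) = finrank k (Module.Dual k (V →ₗ[k] W)) := by
    rw [Subspace.dual_finrank_eq, Module.finrank_linearMap, Module.finrank_linearMap, mul_comm]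
  obtain ⟨C, hC⟩ := (LinearMap.injective_iff_surjective_of_finrank_eq_finrank hdim).mp hinj ζ
  exact ⟨C, fun θ => LinearMap.congr_fun hC θ⟩

theorem LinearMap.dualMap_eq_zero_iff {f : V →ₗ[k] W} : f.dualMap = 0 ↔ f = 0 := by
  refine ⟨fun h => LinearMap.ext fun x => ?_, fun h => by rw [h, LinearMap.dualMap_def, map_zero]⟩
  refine (Module.forall_dual_apply_eq_zero_iff k (f x)).mp fun ψ => ?_
  simpa using LinearMap.congr_fun (LinearMap.congr_fun h ψ) x

theorem LinearMap.nontrivial_of_ker_ne_bot {f : V →ₗ[k] W} (h : ker f ≠ ⊥) :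
    Nontrivial V := by
  obtain ⟨v, -, hv⟩ := Submodule.exists_mem_ne_zero_of_ne_bot h
  exact nontrivial_of_ne v 0 hv

theorem LinearMap.nontrivial_of_range_ne_top {f : V →ₗ[k] W} (h : range f ≠ ⊤) :
    Nontrivial W :=
  not_subsingleton_iff_nontrivial.mp fun _ => h (Subsingleton.elim _ _)

theorem LinearMap.not_surjective_of_finrank_lt [FiniteDimensional k V] {f : V →ₗ[k] W}
    (h : finrank k V < finrank k W) : ¬Surjective f :=
  fun hs => (LinearMap.finrank_le_finrank_of_surjective hs).not_gt h

theorem LinearMap.bijective_of_finrank_eq_one [FiniteDimensional k V] [FiniteDimensional k W]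
    {f : V →ₗ[k] W} (hV : finrank k V = 1) (hW : finrank k W = 1) (hf : f ≠ 0) : Bijective f := by
  have hs : Surjective f := by
    rw [← LinearMap.range_eq_top]
    refine Submodule.eq_top_of_finrank_eq (le_antisymm (Submodule.finrank_le _) ?_)
    rwa [hW, Nat.one_le_iff_ne_zero, Ne, Submodule.finrank_eq_zero, LinearMap.range_eq_bot]
  exact ⟨(LinearMap.injective_iff_surjective_of_finrank_eq_finrank (hV.trans hW.symm)).mpr hs, hs⟩

theorem LinearMap.exists_inverse_of_bijective {f : V →ₗ[k] W} (hf : Bijective f) :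
    ∃ g : W →ₗ[k] V, g ∘ₗ f = LinearMap.id ∧ f ∘ₗ g = LinearMap.id :=
  ⟨(LinearEquiv.ofBijective f hf).symm, by ext; simp, by ext; simp⟩

theorem subsingleton_of_zero_eq_smul_id {c : k} (hc : c ≠ 0)
    (h : (0 : V →ₗ[k] V) = c • LinearMap.id) : Subsingleton V :=
  subsingleton_of_forall_eq 0 fun x => by simpa [hc] using (LinearMap.congr_fun h x).symm

theorem eq_zero_of_zero_eq_smul_id [Nontrivial V] {c : k}
    (h : (0 : V →ₗ[k] V) = c • LinearMap.id) : c = 0 :=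
  by_contra fun hc => not_subsingleton V (subsingleton_of_zero_eq_smul_id hc h)

theorem finrank_le_one_of_smulRight_eq_smul_id {ψ : Module.Dual k V} {v : V} {c : k} (hc : c ≠ 0)
    (h : ψ.smulRight v = c • LinearMap.id) : finrank k V ≤ 1 :=
  finrank_le_one v fun x => ⟨c⁻¹ * ψ x, by
    rw [mul_smul, ← LinearMap.smulRight_apply, h, LinearMap.smul_apply, LinearMap.id_apply,
      inv_smul_smul₀ hc]⟩

theorem eq_zero_of_smul_eq_zero_of_smul_eq_zero {c d : k} (hcd : (c, d) ≠ 0) {v : V}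
    (hc : c • v = 0) (hd : d • v = 0) : v = 0 := by
  by_cases h : c = 0
  · exact (smul_eq_zero.mp hd).resolve_left fun h' => hcd (by simp [h, h'])
  · exact (smul_eq_zero.mp hc).resolve_left h

end LinearAlgebra

section Pencil

variable {U W U' W' : Type*} [AddCommGroup U] [Module k U] [AddCommGroup W] [Module k W]
  [AddCommGroup U'] [Module k U'] [AddCommGroup W'] [Module k W']

def IsPencilInjective (a b : U →ₗ[k] W) : Prop :=
  ∀ c d : k, (c, d) ≠ 0 → Injective (c • a + d • b)

def IsPencilSurjective (a b : U →ₗ[k] W) : Prop :=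
  ∀ c d : k, (c, d) ≠ 0 → Surjective (c • a + d • b)

namespace IsPencilInjective

variable {a b : U →ₗ[k] W} {a' b' : U' →ₗ[k] W'}

theorem injective_left (hp : IsPencilInjective a b) : Injective a := by
  simpa using hp 1 0 (by simp)

theorem injective_right (hp : IsPencilInjective a b) : Injective b := by
  simpa using hp 0 1 (by simp)

theorem symm_neg (hp : IsPencilInjective a b) : IsPencilInjective b (-a) := by
  intro c d hcd
  have hcd' : (-d, c) ≠ 0 := by
    simp only [ne_eq, Prod.mk_eq_zero, neg_eq_zero] at hcd ⊢
    tauto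
  have hcomb : c • b + d • -a = (-d) • a + c • b := by rw [smul_neg, neg_smul, add_comm]
  rw [hcomb]
  exact hp (-d) c hcd'

theorem map_ne_map [IsAlgClosed k] [FiniteDimensional k U] (hp : IsPencilInjective a b)
    {Z : Submodule k U} (hZ : Z ≠ ⊥) : Z.map a ≠ Z.map b := by
  intro h
  have : Nontrivial Z := Submodule.nontrivial_iff_ne_bot.mpr hZ
  let eb : Z ≃ₗ[k] Z.map b := Submodule.equivMapOfInjective b hp.injective_right Z
  let a' : Z →ₗ[k] Z.map b :=
    (a.domRestrict Z).codRestrict (Z.map b) fun z => h ▸ Submodule.mem_map_of_mem z.2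
  -- an eigenvector of `b⁻¹ a` on `Z` is killed by a combination of `a` and `b`
  obtain ⟨μ, hμ⟩ := Module.End.exists_eigenvalue (eb.symm.toLinearMap ∘ₗ a')
  obtain ⟨v, hv⟩ := hμ.exists_hasEigenvector
  have hav : a v = μ • b v := by
    have := congrArg (fun z => ((eb z : Z.map b) : W)) hv.apply_eq_smul
    simpa [a', eb] using this
  have hv0 : ((1 : k) • a + (-μ) • b) v = 0 := by simp [hav]
  exact hv.2 (Subtype.ext (hp 1 (-μ) (by simp) (hv0.trans (map_zero _).symm)))

theorem finrank_lt_of_map_le [IsAlgClosed k] [FiniteDimensional k U] [FiniteDimensional k W]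
    (hp : IsPencilInjective a b) {Z : Submodule k U} {Z' : Submodule k W}
    (ha : Z.map a ≤ Z') (hb : Z.map b ≤ Z') (hne : ¬(Z = ⊥ ∧ Z' = ⊥)) :
    finrank k Z < finrank k Z' := by
  by_contra! hle
  have hZa : Z.map a = Z' := Submodule.eq_of_le_of_finrank_le ha <| by
    rwa [← (Submodule.equivMapOfInjective a hp.injective_left Z).finrank_eq]
  have hZb : Z.map b = Z' := Submodule.eq_of_le_of_finrank_le hb <| by
    rwa [← (Submodule.equivMapOfInjective b hp.injective_right Z).finrank_eq]
  have hZ : Z ≠ ⊥ := by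
    rintro rfl
    exact hne ⟨rfl, by rw [← hZa, Submodule.map_bot]⟩
  exact hp.map_ne_map hZ (hZa.trans hZb.symm)

theorem injective_of_morphism [IsAlgClosed k] [FiniteDimensional k U] [FiniteDimensional k W]
    [FiniteDimensional k U'] [FiniteDimensional k W']
    (hp : IsPencilInjective a b) (hp' : IsPencilInjective a' b')
    (hd' : finrank k W' = finrank k U' + 1) {u₁ : U' →ₗ[k] U} {u₂ : W' →ₗ[k] W}
    (ha : u₂ ∘ₗ a' = a ∘ₗ u₁) (hb : u₂ ∘ₗ b' = b ∘ₗ u₁) (hne : ¬(u₁ = 0 ∧ u₂ = 0)) :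
    Injective u₁ ∧ Injective u₂ := by
  have hker {f : U' →ₗ[k] W'} {g : U →ₗ[k] W} (hfg : u₂ ∘ₗ f = g ∘ₗ u₁) :
      (ker u₁).map f ≤ ker u₂ := by
    rintro _ ⟨x, hx, rfl⟩
    simp only [SetLike.mem_coe, LinearMap.mem_ker] at hx ⊢
    rw [← LinearMap.comp_apply, hfg, LinearMap.comp_apply, hx, map_zero]
  have hrange {f : U' →ₗ[k] W'} {g : U →ₗ[k] W} (hfg : u₂ ∘ₗ f = g ∘ₗ u₁) :
      (range u₁).map g ≤ range u₂ := by
    rintro _ ⟨_, ⟨x, rfl⟩, rfl⟩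
    exact ⟨f x, by rw [← LinearMap.comp_apply, hfg, LinearMap.comp_apply]⟩
  -- kernel and image are subpairs, each with `dim Z < dim Z'`, but their dimension vectors add
  -- up to `(n, n + 1)`
  by_contra hninj
  have hK := hp'.finrank_lt_of_map_le (hker ha) (hker hb)
    (by simpa only [LinearMap.ker_eq_bot, not_and_or] using hninj)
  have hI := hp.finrank_lt_of_map_le (hrange ha) (hrange hb)
    (by simpa only [LinearMap.range_eq_bot] using hne)
  have := LinearMap.finrank_range_add_finrank_ker u₁
  have := LinearMap.finrank_range_add_finrank_ker u₂
  omega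

theorem mkQ_inl_mkQ_inr (hp : IsPencilInjective a b) :
    IsPencilInjective ((range (a.prod b)).mkQ ∘ₗ LinearMap.inl k W W)
      ((range (a.prod b)).mkQ ∘ₗ LinearMap.inr k W W) := by
  intro c d hcd
  rw [← LinearMap.ker_eq_bot, LinearMap.ker_eq_bot']
  intro w hw
  have hmem : ((c • w, d • w) : W × W) ∈ range (a.prod b) := by
    rw [← Submodule.Quotient.mk_eq_zero]
    simpa [← Submodule.Quotient.mk_smul, ← Submodule.Quotient.mk_add] using hw
  obtain ⟨x, hx⟩ := hmem
  have hax : a x = c • w := congrArg Prod.fst hx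
  have hbx : b x = d • w := congrArg Prod.snd hx
  have hx0 : x = 0 := hp d (-c) (by simpa [and_comm] using hcd) <| by
    simp [hax, hbx, smul_smul, mul_comm]
  rw [hx0, map_zero] at hax hbx
  exact eq_zero_of_smul_eq_zero_of_smul_eq_zero hcd hax.symm hbx.symm

theorem fst_snd_ker_coprod (hp : IsPencilInjective a b) :
    IsPencilInjective (LinearMap.fst k U U ∘ₗ (ker (a.coprod b)).subtype)
      (LinearMap.snd k U U ∘ₗ (ker (a.coprod b)).subtype) := by
  intro c d hcd
  rw [← LinearMap.ker_eq_bot, LinearMap.ker_eq_bot']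
  rintro ⟨⟨x, y⟩, hxy⟩ h
  simp only [LinearMap.mem_ker, LinearMap.coprod_apply] at hxy
  simp only [LinearMap.add_apply, LinearMap.smul_apply, LinearMap.comp_apply,
    Submodule.coe_subtype, LinearMap.fst_apply, LinearMap.snd_apply] at h
  have hx : x = 0 := hp d (-c) (by simpa [and_comm] using hcd) <| by
    have : (d • a + (-c) • b) x = -b (c • x + d • y) := by
      simp only [LinearMap.add_apply, LinearMap.smul_apply, LinearMap.neg_apply, map_add,
        map_smul, eq_neg_of_add_eq_zero_left hxy, smul_neg, neg_smul]
      abel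
    rw [this, h, map_zero, neg_zero, map_zero]
  rw [hx, map_zero, zero_add] at hxy
  have hy : y = 0 := hp.injective_right (hxy.trans (map_zero b).symm)
  simp [hx, hy]

/-- Kronecker-module form: `(P, Q)` induces a morphism into `(a, b)` from the cokernel pair of
`(a', b')`, whose dimension vector is `(dim W', dim W' + 1)`. -/
theorem finrank_le_of_pair [IsAlgClosed k] [FiniteDimensional k U] [FiniteDimensional k W]
    [FiniteDimensional k U'] [FiniteDimensional k W']
    (hp : IsPencilInjective a b) (hp' : IsPencilInjective a' b')
    (hd' : finrank k W' = finrank k U' + 1) {P Q : W' →ₗ[k] U} (hPQ : ¬(P = 0 ∧ Q = 0))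
    (h : a ∘ₗ P + b ∘ₗ Q = 0) (h' : P ∘ₗ a' + Q ∘ₗ b' = 0) :
    finrank k W' ≤ finrank k U := by
  set R := range (a'.prod b')
  have hR : R ≤ ker (P.coprod Q) := by
    rintro _ ⟨x, rfl⟩
    simpa using LinearMap.congr_fun h' x
  have haP : a ∘ₗ P = -(b ∘ₗ Q) := eq_neg_of_add_eq_zero_left h
  have hQ : Q ≠ 0 := by
    rintro rfl
    refine hPQ ⟨?_, rfl⟩
    ext w
    exact hp.injective_left (by simpa using LinearMap.congr_fun haP w)
  have hdim : finrank k ((W' × W') ⧸ R) = finrank k W' + 1 := by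
    have hinj : Injective (a'.prod b') := fun x y hxy => hp'.injective_left (congrArg Prod.fst hxy)
    have := Submodule.finrank_quotient_add_finrank R
    rw [LinearMap.finrank_range_of_inj hinj, Module.finrank_prod] at this
    omega
  have hm := hp.injective_of_morphism hp'.mkQ_inl_mkQ_inr.symm_neg hdim
    (u₁ := Q) (u₂ := a ∘ₗ R.liftQ (P.coprod Q) hR)
    (by ext w; simp) (by ext w; simpa [neg_eq_iff_eq_neg] using LinearMap.congr_fun haP w)
    (fun h => hQ h.1)
  exact LinearMap.finrank_le_finrank_of_injective hm.1

/-- Kronecker-module form: `A` is the second component of a morphism from `(b', -a')` into the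
kernel pair of `(a, b)`. -/
theorem finrank_le_of_intertwiner [IsAlgClosed k] [FiniteDimensional k U]
    [FiniteDimensional k U'] [FiniteDimensional k W']
    (hp : IsPencilInjective a b) (hp' : IsPencilInjective a' b')
    (hd' : finrank k W' = finrank k U' + 1) {A : W' →ₗ[k] U} (hA : A ≠ 0)
    (h : a ∘ₗ (A ∘ₗ b') = b ∘ₗ (A ∘ₗ a')) : finrank k W' ≤ finrank k U := by
  let χ : U' →ₗ[k] ker (a.coprod b) := ((A ∘ₗ b').prod (-(A ∘ₗ a'))).codRestrict _ fun x => by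
    simpa [← sub_eq_add_neg, sub_eq_zero] using LinearMap.congr_fun h x
  have hm := hp.fst_snd_ker_coprod.injective_of_morphism hp'.symm_neg hd' (u₁ := χ) (u₂ := A)
    (by ext; simp [χ]) (by ext; simp [χ]) (fun h => hA h.2)
  exact LinearMap.finrank_le_finrank_of_injective hm.2

end IsPencilInjective

namespace IsPencilSurjective

variable {a b : U →ₗ[k] W} {a' b' : U' →ₗ[k] W'}

theorem surjective_left (hp : IsPencilSurjective a b) : Surjective a := by
  simpa using hp 1 0 (by simp)

theorem surjective_right (hp : IsPencilSurjective a b) : Surjective b := by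
  simpa using hp 0 1 (by simp)

theorem dualMap (hp : IsPencilSurjective a b) : IsPencilInjective a.dualMap b.dualMap := by
  intro c d hcd
  have : c • a.dualMap + d • b.dualMap = (c • a + d • b).dualMap := by
    simp only [LinearMap.dualMap_def, map_add, map_smul]
  rw [this]
  exact LinearMap.dualMap_injective_of_surjective (hp c d hcd)

theorem finrank_le_of_pair [IsAlgClosed k] [FiniteDimensional k U] [FiniteDimensional k W]
    [FiniteDimensional k U'] [FiniteDimensional k W']
    (hp : IsPencilSurjective a b) (hp' : IsPencilSurjective a' b')
    (hd : finrank k U = finrank k W + 1) {P Q : W' →ₗ[k] U} (hPQ : ¬(P = 0 ∧ Q = 0))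
    (h : a ∘ₗ P + b ∘ₗ Q = 0) (h' : P ∘ₗ a' + Q ∘ₗ b' = 0) :
    finrank k U ≤ finrank k W' := by
  simpa only [Subspace.dual_finrank_eq] using hp'.dualMap.finrank_le_of_pair hp.dualMap
    (by simpa only [Subspace.dual_finrank_eq] using hd) (P := P.dualMap) (Q := Q.dualMap)
    (by simpa only [LinearMap.dualMap_eq_zero_iff] using hPQ)
    (by rw [LinearMap.dualMap_comp_dualMap, LinearMap.dualMap_comp_dualMap, LinearMap.dualMap_def,
      LinearMap.dualMap_def, ← map_add, h', map_zero])
    (by rw [LinearMap.dualMap_comp_dualMap, LinearMap.dualMap_comp_dualMap, LinearMap.dualMap_def,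
      LinearMap.dualMap_def, ← map_add, h, map_zero])

theorem finrank_le_of_intertwiner [IsAlgClosed k] [FiniteDimensional k U] [FiniteDimensional k W]
    [FiniteDimensional k U'] [FiniteDimensional k W']
    (hp : IsPencilSurjective a b) (hp' : IsPencilSurjective a' b')
    (hd : finrank k U = finrank k W + 1) {A : W' →ₗ[k] U} (hA : A ≠ 0)
    (h : a ∘ₗ (A ∘ₗ b') = b ∘ₗ (A ∘ₗ a')) : finrank k U ≤ finrank k W' := by
  simpa only [Subspace.dual_finrank_eq] using hp'.dualMap.finrank_le_of_intertwiner hp.dualMap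
    (by simpa only [Subspace.dual_finrank_eq] using hd) (A := A.dualMap)
    (mt LinearMap.dualMap_eq_zero_iff.mp hA)
    (by simp only [LinearMap.dualMap_comp_dualMap, LinearMap.comp_assoc, h])

end IsPencilSurjective

def IsBrickPair (a b : U →ₗ[k] W) : Prop :=
  ∀ (φ₁ : U →ₗ[k] U) (φ₂ : W →ₗ[k] W), φ₂ ∘ₗ a = a ∘ₗ φ₁ → φ₂ ∘ₗ b = b ∘ₗ φ₁ →
    ∃ c : k, φ₁ = c • LinearMap.id ∧ φ₂ = c • LinearMap.id

namespace IsBrickPair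

variable {a b : U →ₗ[k] W}

theorem swap (h : IsBrickPair a b) : IsBrickPair b a :=
  fun φ₁ φ₂ hb ha => h φ₁ φ₂ ha hb

/-- A kernel vector `u` and a cokernel functional `η` of `c • a + d • b` give the endomorphism
`((η ∘ a) ⊗ u, η ⊗ a u)`, of rank at most one. -/
theorem injective_or_surjective_of_ne_zero [FiniteDimensional k U] [FiniteDimensional k W]
    (hbp : IsBrickPair a b) (hdim : 2 ≤ finrank k U ∨ 2 ≤ finrank k W) {c d : k} (hd : d ≠ 0) :
    Injective (c • a + d • b) ∨ Surjective (c • a + d • b) := by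
  by_contra! ⟨hinj, hsurj⟩
  obtain ⟨u, hu, hu0⟩ := Submodule.exists_mem_ne_zero_of_ne_bot (mt LinearMap.ker_eq_bot.mp hinj)
  obtain ⟨η, hη0, hη⟩ := (range (c • a + d • b)).exists_le_ker_of_lt_top
    (lt_top_iff_ne_top.mpr (mt LinearMap.range_eq_top.mp hsurj))
  have hu' : d • b u = -(c • a u) := by
    simpa [eq_neg_iff_add_eq_zero, add_comm] using hu
  have hη' (x : U) : d * η (b x) = -(c * η (a x)) := by
    simpa [eq_neg_iff_add_eq_zero, add_comm] using hη ⟨x, rfl⟩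
  by_cases hau : a u = 0
  · obtain ⟨ξ, hξ⟩ := Module.Projective.exists_dual_ne_zero k hu0
    have hbu : b u = 0 := by simpa [hau, hd] using hu'
    obtain ⟨c₀, hc₁, hc₂⟩ := hbp (ξ.smulRight u) 0 (by ext; simp [hau]) (by ext; simp [hbu])
    have hc₀ : c₀ ≠ 0 := by
      rintro rfl
      rw [zero_smul, LinearMap.smulRight_apply_eq_zero_iff] at hc₁
      exact hc₁.elim (fun h => hξ (by simp [h])) hu0
    have := finrank_le_one_of_smulRight_eq_smul_id hc₀ hc₁
    have := subsingleton_of_zero_eq_smul_id hc₀ hc₂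
    have := finrank_zero_of_subsingleton (R := k) (M := W)
    omega
  · have hcomm (x : U) : η (b x) • a u = η (a x) • b u := by
      apply smul_right_injective W hd
      calc d • (η (b x) • a u) = (d * η (b x)) • a u := smul_smul _ _ _
        _ = η (a x) • -(c • a u) := by rw [hη', neg_smul, smul_neg, smul_smul, mul_comm]
        _ = d • (η (a x) • b u) := by rw [← hu', smul_comm]
    obtain ⟨c₀, hc₁, hc₂⟩ := hbp ((η ∘ₗ a).smulRight u) (η.smulRight (a u))
      (by ext; simp) (by ext; simp [hcomm])
    have hc₀ : c₀ ≠ 0 := by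
      rintro rfl
      rw [zero_smul, LinearMap.smulRight_apply_eq_zero_iff] at hc₂
      tauto
    have := finrank_le_one_of_smulRight_eq_smul_id hc₀ hc₁
    have := finrank_le_one_of_smulRight_eq_smul_id hc₀ hc₂
    omega

theorem injective_or_surjective [FiniteDimensional k U] [FiniteDimensional k W]
    (hbp : IsBrickPair a b) (hdim : 2 ≤ finrank k U ∨ 2 ≤ finrank k W) {c d : k}
    (hcd : (c, d) ≠ 0) : Injective (c • a + d • b) ∨ Surjective (c • a + d • b) := by
  by_cases hd : d = 0
  · have hc : c ≠ 0 := fun hc => hcd (by simp [hc, hd])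
    rw [add_comm]
    exact hbp.swap.injective_or_surjective_of_ne_zero hdim hc
  · exact hbp.injective_or_surjective_of_ne_zero hdim hd

theorem isPencilInjective [FiniteDimensional k U] [FiniteDimensional k W] (hbp : IsBrickPair a b)
    (hdim : finrank k W = finrank k U + 1) : IsPencilInjective a b := by
  intro c d hcd
  rcases Nat.eq_zero_or_pos (finrank k U) with hU | hU
  · have : Subsingleton U := finrank_zero_iff.mp hU
    exact injective_of_subsingleton _
  · refine (hbp.injective_or_surjective (by omega) hcd).resolve_right fun hs => ?_
    have := LinearMap.finrank_le_finrank_of_surjective hs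
    omega

theorem isPencilSurjective [FiniteDimensional k U] [FiniteDimensional k W] (hbp : IsBrickPair a b)
    (hdim : finrank k U = finrank k W + 1) : IsPencilSurjective a b := by
  intro c d hcd
  rcases Nat.eq_zero_or_pos (finrank k W) with hW | hW
  · have : Subsingleton W := finrank_zero_iff.mp hW
    exact fun w => ⟨0, Subsingleton.elim _ _⟩
  · refine (hbp.injective_or_surjective (by omega) hcd).resolve_left fun hi => ?_
    have := LinearMap.finrank_le_finrank_of_injective hi
    omega

end IsBrickPair

end Pencil

namespace RepQ1

section Ext

variable (X Y : RepQ1 k)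

theorem phi_apply (g : (X.V1 →ₗ[k] Y.V1) × (X.V2 →ₗ[k] Y.V2) × (X.V3 →ₗ[k] Y.V3)) :
    phi X Y g = (g.2.2 ∘ₗ X.r13 - Y.r13 ∘ₗ g.1, g.2.1 ∘ₗ X.r12 - Y.r12 ∘ₗ g.1,
      g.2.2 ∘ₗ X.r23 - Y.r23 ∘ₗ g.2.1) := rfl

theorem ext1_eq_zero_iff : ext1 X Y = 0 ↔ range (phi X Y) = ⊤ := by
  rw [ext1, finrank_zero_iff, Submodule.Quotient.subsingleton_iff]

theorem hom_sub_ext1_s8 :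
    (hom X Y : ℤ) - ext1 X Y =
      finrank k X.V1 * finrank k Y.V1 + finrank k X.V2 * finrank k Y.V2 +
        finrank k X.V3 * finrank k Y.V3 - finrank k X.V1 * finrank k Y.V3 -
        finrank k X.V1 * finrank k Y.V2 - finrank k X.V2 * finrank k Y.V3 := by
  have hker : homSpace X Y = ker (phi X Y) := by
    ext f
    simp only [LinearMap.mem_ker, phi_apply, Prod.mk_eq_zero, sub_eq_zero]
    rfl
  have hrank := LinearMap.finrank_range_add_finrank_ker (phi X Y)
  have hquot := Submodule.finrank_quotient_add_finrank (range (phi X Y))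
  simp only [Module.finrank_prod, Module.finrank_linearMap] at hrank hquot
  rw [hom, ext1, hker]
  linarith

variable {X Y} (A : Y.V3 →ₗ[k] X.V1) (B : Y.V2 →ₗ[k] X.V1) (C : Y.V3 →ₗ[k] X.V2)

def tracePairing :
    Module.Dual k ((X.V1 →ₗ[k] Y.V3) × (X.V1 →ₗ[k] Y.V2) × (X.V2 →ₗ[k] Y.V3)) where
  toFun θ := LinearMap.trace k X.V1 (A ∘ₗ θ.1) + LinearMap.trace k X.V1 (B ∘ₗ θ.2.1) +
    LinearMap.trace k X.V2 (C ∘ₗ θ.2.2)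
  map_add' θ θ' := by simp only [Prod.fst_add, Prod.snd_add, LinearMap.comp_add, map_add]; ring
  map_smul' c θ := by
    simp only [Prod.smul_fst, Prod.smul_snd, LinearMap.comp_smul, map_smul, smul_eq_mul,
      RingHom.id_apply]
    ring

/-- Under the trace pairing, the dual of `Ext¹(X, Y)` (see `tracePairing_comp_phi_eq_zero_iff`). -/
def IsExtDual : Prop :=
  X.r13 ∘ₗ A + X.r23 ∘ₗ C = 0 ∧ X.r12 ∘ₗ B = C ∘ₗ Y.r23 ∧ A ∘ₗ Y.r13 + B ∘ₗ Y.r12 = 0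

theorem tracePairing_apply (θ : (X.V1 →ₗ[k] Y.V3) × (X.V1 →ₗ[k] Y.V2) × (X.V2 →ₗ[k] Y.V3)) :
    tracePairing A B C θ = LinearMap.trace k X.V1 (A ∘ₗ θ.1) +
      LinearMap.trace k X.V1 (B ∘ₗ θ.2.1) + LinearMap.trace k X.V2 (C ∘ₗ θ.2.2) := rfl

theorem tracePairing_eq_zero_iff : tracePairing A B C = 0 ↔ A = 0 ∧ B = 0 ∧ C = 0 := by
  refine ⟨fun h => ⟨?_, ?_, ?_⟩, by
    rintro ⟨rfl, rfl, rfl⟩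
    exact LinearMap.ext fun θ => by simp [tracePairing_apply]⟩
  · exact LinearMap.eq_zero_of_forall_trace_comp_eq_zero fun θ => by
      simpa [tracePairing_apply] using LinearMap.congr_fun h (θ, 0, 0)
  · exact LinearMap.eq_zero_of_forall_trace_comp_eq_zero fun θ => by
      simpa [tracePairing_apply] using LinearMap.congr_fun h (0, θ, 0)
  · exact LinearMap.eq_zero_of_forall_trace_comp_eq_zero fun θ => by
      simpa [tracePairing_apply] using LinearMap.congr_fun h (0, 0, θ)

theorem exists_tracePairing_eq
    (ζ : Module.Dual k ((X.V1 →ₗ[k] Y.V3) × (X.V1 →ₗ[k] Y.V2) × (X.V2 →ₗ[k] Y.V3))) :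
    ∃ A B C, tracePairing (X := X) (Y := Y) A B C = ζ := by
  obtain ⟨A, hA⟩ := LinearMap.exists_trace_comp_eq (ζ ∘ₗ LinearMap.inl k _ _)
  obtain ⟨B, hB⟩ :=
    LinearMap.exists_trace_comp_eq (ζ ∘ₗ LinearMap.inr k _ _ ∘ₗ LinearMap.inl k _ _)
  obtain ⟨C, hC⟩ :=
    LinearMap.exists_trace_comp_eq (ζ ∘ₗ LinearMap.inr k _ _ ∘ₗ LinearMap.inr k _ _)
  refine ⟨A, B, C, LinearMap.ext fun θ => ?_⟩
  simp only [tracePairing_apply, hA, hB, hC, LinearMap.comp_apply, ← map_add]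
  congr 1
  ext <;> simp

theorem tracePairing_phi (g : (X.V1 →ₗ[k] Y.V1) × (X.V2 →ₗ[k] Y.V2) × (X.V3 →ₗ[k] Y.V3)) :
    tracePairing A B C (phi X Y g) =
      LinearMap.trace k X.V3 ((X.r13 ∘ₗ A + X.r23 ∘ₗ C) ∘ₗ g.2.2) +
        LinearMap.trace k X.V2 ((X.r12 ∘ₗ B - C ∘ₗ Y.r23) ∘ₗ g.2.1) -
        LinearMap.trace k X.V1 ((A ∘ₗ Y.r13 + B ∘ₗ Y.r12) ∘ₗ g.1) := by
  simp only [tracePairing_apply, phi_apply, LinearMap.comp_sub, LinearMap.add_comp,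
    LinearMap.sub_comp, map_add, map_sub, LinearMap.comp_assoc]
  rw [← LinearMap.trace_comp_comm' X.r13 (A ∘ₗ g.2.2),
    ← LinearMap.trace_comp_comm' X.r12 (B ∘ₗ g.2.1),
    ← LinearMap.trace_comp_comm' X.r23 (C ∘ₗ g.2.2)]
  simp only [LinearMap.comp_assoc]
  ring

theorem tracePairing_comp_phi_eq_zero_iff :
    tracePairing A B C ∘ₗ phi X Y = 0 ↔ IsExtDual A B C := by
  constructor
  · intro h
    have hg (g) : tracePairing A B C (phi X Y g) = 0 := LinearMap.congr_fun h g
    simp only [tracePairing_phi] at hg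
    refine ⟨?_, sub_eq_zero.mp ?_, ?_⟩
    · exact LinearMap.eq_zero_of_forall_trace_comp_eq_zero fun g₃ => by simpa using hg (0, 0, g₃)
    · exact LinearMap.eq_zero_of_forall_trace_comp_eq_zero fun g₂ => by simpa using hg (0, g₂, 0)
    · exact LinearMap.eq_zero_of_forall_trace_comp_eq_zero fun g₁ => by simpa using hg (g₁, 0, 0)
  · rintro ⟨h13, h12, h1⟩
    exact LinearMap.ext fun g => by simp [tracePairing_phi, h13, h12, h1]

variable (X Y) in
theorem ext1_ne_zero_iff :
    ext1 X Y ≠ 0 ↔ ∃ (A : Y.V3 →ₗ[k] X.V1) (B : Y.V2 →ₗ[k] X.V1) (C : Y.V3 →ₗ[k] X.V2),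
      IsExtDual A B C ∧ ¬(A = 0 ∧ B = 0 ∧ C = 0) := by
  simp_rw [← tracePairing_comp_phi_eq_zero_iff, ← tracePairing_eq_zero_iff, Ne,
    ext1_eq_zero_iff]
  constructor
  · intro hr
    obtain ⟨ζ, hζ0, hζ⟩ := (range (phi X Y)).exists_le_ker_of_lt_top (lt_top_iff_ne_top.mpr hr)
    obtain ⟨A, B, C, rfl⟩ := exists_tracePairing_eq ζ
    exact ⟨A, B, C, LinearMap.ext fun g => hζ ⟨g, rfl⟩, hζ0⟩
  · rintro ⟨A, B, C, h, hne⟩ htop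
    refine hne (LinearMap.ext fun θ => ?_)
    obtain ⟨g, rfl⟩ := LinearMap.range_eq_top.mp htop θ
    exact LinearMap.congr_fun h g

end Ext

section Classification

variable {X : RepQ1 k}

theorem eq_smul_id_of_hom_self_eq_one (h1 : hom X X = 1) {φ₁ : X.V1 →ₗ[k] X.V1}
    {φ₂ : X.V2 →ₗ[k] X.V2} {φ₃ : X.V3 →ₗ[k] X.V3} (hφ : (φ₁, φ₂, φ₃) ∈ homSpace X X) :
    ∃ c : k, φ₁ = c • LinearMap.id ∧ φ₂ = c • LinearMap.id ∧ φ₃ = c • LinearMap.id := by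
  let e : homSpace X X := ⟨(LinearMap.id, LinearMap.id, LinearMap.id), by
    refine ⟨?_, ?_, ?_⟩ <;> simp⟩
  have he : e ≠ 0 := by
    intro he
    have hid := congrArg Subtype.val he
    simp only [e, ZeroMemClass.coe_zero, Prod.mk_eq_zero] at hid
    have hbot : homSpace X X = ⊥ := by
      refine (Submodule.eq_bot_iff _).mpr fun ⟨f₁, f₂, f₃⟩ _ => ?_
      rw [← LinearMap.comp_id f₁, ← LinearMap.comp_id f₂, ← LinearMap.comp_id f₃,
        hid.1, hid.2.1, hid.2.2]
      simp
    rw [hom, hbot, finrank_bot] at h1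
    exact zero_ne_one h1
  obtain ⟨c, hc⟩ := (finrank_eq_one_iff_of_nonzero' e he).mp h1 ⟨_, hφ⟩
  have hc' := congrArg Subtype.val hc
  simp only [e, SetLike.val_smul, Prod.smul_mk, Prod.mk.injEq] at hc'
  exact ⟨c, hc'.1.symm, hc'.2.1.symm, hc'.2.2.symm⟩

theorem subsingleton_V1_and_V3_of_hom_self_eq_one (h1 : hom X X = 1)
    (h12 : ¬Function.Surjective X.r12) (h23 : ker X.r23 ≠ ⊥) :
    Subsingleton X.V1 ∧ Subsingleton X.V3 := by
  obtain ⟨u, hu, hu0⟩ := Submodule.exists_mem_ne_zero_of_ne_bot h23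
  obtain ⟨ζ, hζ0, hζ⟩ := (range X.r12).exists_le_ker_of_lt_top
    (lt_top_iff_ne_top.mpr (mt LinearMap.range_eq_top.mp h12))
  obtain ⟨c, hc₁, hc₂, hc₃⟩ := eq_smul_id_of_hom_self_eq_one h1
    (φ₁ := 0) (φ₂ := ζ.smulRight u) (φ₃ := 0) ⟨by simp,
      by ext x; simp [LinearMap.mem_ker.mp (hζ ⟨x, rfl⟩)], by ext y; simp [LinearMap.mem_ker.mp hu]⟩
  have hc : c ≠ 0 := by
    rintro rfl
    rw [zero_smul, LinearMap.smulRight_apply_eq_zero_iff] at hc₂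
    tauto
  exact ⟨subsingleton_of_zero_eq_smul_id hc hc₁, subsingleton_of_zero_eq_smul_id hc hc₃⟩

theorem subsingleton_V2_of_hom_self_eq_one (h1 : hom X X = 1)
    (h12 : ker X.r12 ≠ ⊥) (h23 : range X.r23 ≠ ⊤) : Subsingleton X.V2 := by
  obtain ⟨v, hv, hv0⟩ := Submodule.exists_mem_ne_zero_of_ne_bot h12
  rw [LinearMap.mem_ker] at hv
  obtain ⟨ζ, hζ0, hζ⟩ :=
    (range X.r23).exists_le_ker_of_lt_top (lt_top_iff_ne_top.mpr h23)
  have := LinearMap.nontrivial_of_range_ne_top h23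
  have hFv : X.r13 v ≠ 0 := by
    intro hFv
    obtain ⟨ξ, hξ⟩ := Module.Projective.exists_dual_ne_zero k hv0
    obtain ⟨c, hc₁, -, hc₃⟩ := eq_smul_id_of_hom_self_eq_one h1
      (φ₁ := ξ.smulRight v) (φ₂ := 0) (φ₃ := 0) ⟨by ext; simp [hFv], by ext; simp [hv], by simp⟩
    rw [eq_zero_of_zero_eq_smul_id hc₃, zero_smul, LinearMap.smulRight_apply_eq_zero_iff] at hc₁
    exact hc₁.elim (fun h => hξ (by simp [h])) hv0
  obtain ⟨c, -, hc₂, hc₃⟩ := eq_smul_id_of_hom_self_eq_one h1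
    (φ₁ := (ζ ∘ₗ X.r13).smulRight v) (φ₂ := 0) (φ₃ := ζ.smulRight (X.r13 v))
    ⟨by ext; simp, by ext; simp [hv], by ext y; simp [LinearMap.mem_ker.mp (hζ ⟨y, rfl⟩)]⟩
  have hc : c ≠ 0 := by
    rintro rfl
    rw [zero_smul, LinearMap.smulRight_apply_eq_zero_iff] at hc₃
    tauto
  exact subsingleton_of_zero_eq_smul_id hc hc₂

theorem isBrickPair_of_inverse_r23 (h1 : hom X X = 1) {T : X.V3 →ₗ[k] X.V2}
    (hT : T ∘ₗ X.r23 = LinearMap.id) (hT' : X.r23 ∘ₗ T = LinearMap.id) :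
    IsBrickPair (T ∘ₗ X.r13) X.r12 := by
  intro φ₁ φ₂ ha hb
  have hφ : (φ₁, φ₂, X.r23 ∘ₗ φ₂ ∘ₗ T) ∈ homSpace X X := by
    refine ⟨?_, hb, ?_⟩
    · rw [← LinearMap.id_comp (X.r13 ∘ₗ φ₁), ← hT']
      simp only [LinearMap.comp_assoc]
      rw [ha, LinearMap.comp_assoc]
    · simp only [LinearMap.comp_assoc, hT, LinearMap.comp_id]
  obtain ⟨c, hc₁, hc₂, -⟩ := eq_smul_id_of_hom_self_eq_one h1 hφ
  exact ⟨c, hc₁, hc₂⟩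

theorem isBrickPair_of_inverse_r12 (h1 : hom X X = 1) {S : X.V2 →ₗ[k] X.V1}
    (hS : S ∘ₗ X.r12 = LinearMap.id) (hS' : X.r12 ∘ₗ S = LinearMap.id) :
    IsBrickPair X.r13 (X.r23 ∘ₗ X.r12) := by
  intro φ₁ φ₃ ha hb
  have hφ : (φ₁, X.r12 ∘ₗ φ₁ ∘ₗ S, φ₃) ∈ homSpace X X := by
    refine ⟨ha, ?_, ?_⟩
    · simp only [LinearMap.comp_assoc, hS, LinearMap.comp_id]
    · rw [← LinearMap.comp_id (φ₃ ∘ₗ X.r23), ← hS']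
      simpa only [LinearMap.comp_assoc] using congrArg (· ∘ₗ S) hb
  obtain ⟨c, hc₁, -, hc₃⟩ := eq_smul_id_of_hom_self_eq_one h1 hφ
  exact ⟨c, hc₁, hc₃⟩

/-! The shapes of `E1 k m`, …, `E4 k m`: an arrow at vertex `2` is invertible and the remaining
Kronecker pair `V1 ⇉ V2` (`E1`, `E2`) or `V1 ⇉ V3` (`E3`, `E4`) is pencil-surjective (`E1`, `E4`:
preinjective) or pencil-injective (`E2`, `E3`: preprojective). -/

def IsTypeE1 (X : RepQ1 k) : Prop :=
  ∃ T : X.V3 →ₗ[k] X.V2, T ∘ₗ X.r23 = LinearMap.id ∧ X.r23 ∘ₗ T = LinearMap.id ∧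
    IsPencilSurjective (T ∘ₗ X.r13) X.r12 ∧ finrank k X.V1 = finrank k X.V2 + 1

def IsTypeE2 (X : RepQ1 k) : Prop :=
  ∃ T : X.V3 →ₗ[k] X.V2, T ∘ₗ X.r23 = LinearMap.id ∧ X.r23 ∘ₗ T = LinearMap.id ∧
    IsPencilInjective (T ∘ₗ X.r13) X.r12 ∧ finrank k X.V2 = finrank k X.V1 + 1

def IsTypeE3 (X : RepQ1 k) : Prop :=
  ∃ S : X.V2 →ₗ[k] X.V1, S ∘ₗ X.r12 = LinearMap.id ∧ X.r12 ∘ₗ S = LinearMap.id ∧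
    IsPencilInjective X.r13 (X.r23 ∘ₗ X.r12) ∧ finrank k X.V3 = finrank k X.V1 + 1

def IsTypeE4 (X : RepQ1 k) : Prop :=
  ∃ S : X.V2 →ₗ[k] X.V1, S ∘ₗ X.r12 = LinearMap.id ∧ X.r12 ∘ₗ S = LinearMap.id ∧
    IsPencilSurjective X.r13 (X.r23 ∘ₗ X.r12) ∧ finrank k X.V1 = finrank k X.V3 + 1

def IsPreprojective (X : RepQ1 k) : Prop := X.IsTypeE2 ∨ X.IsTypeE3

def IsPreinjective (X : RepQ1 k) : Prop := X.IsTypeE1 ∨ X.IsTypeE4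

def IsTypeM (X : RepQ1 k) : Prop :=
  finrank k X.V1 = 0 ∧ finrank k X.V2 = 1 ∧ finrank k X.V3 = 0

def IsTypeM' (X : RepQ1 k) : Prop :=
  finrank k X.V1 = 1 ∧ finrank k X.V2 = 0 ∧ finrank k X.V3 = 1 ∧ Function.Bijective X.r13

/-- The real roots of the quadratic form of `Q1`. -/
theorem root_cases {d₁ d₂ d₃ : ℕ}
    (h : (d₁ : ℤ) * d₁ + d₂ * d₂ + d₃ * d₃ - d₁ * d₃ - d₁ * d₂ - d₂ * d₃ = 1) :
    (d₂ = d₃ ∧ (d₂ = d₁ + 1 ∨ d₁ = d₂ + 1)) ∨ (d₁ = d₂ ∧ (d₃ = d₁ + 1 ∨ d₁ = d₃ + 1)) ∨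
      (d₁ = d₃ ∧ (d₂ = d₁ + 1 ∨ d₁ = d₂ + 1)) := by
  obtain ⟨x, hx⟩ : ∃ x : ℤ, x = d₁ - d₂ := ⟨_, rfl⟩
  obtain ⟨y, hy⟩ : ∃ y : ℤ, y = d₂ - d₃ := ⟨_, rfl⟩
  have hq : x ^ 2 + x * y + y ^ 2 = 1 := by rw [hx, hy]; linear_combination h
  have : x ^ 2 ≤ 1 := by nlinarith [sq_nonneg (x + 2 * y)]
  have : y ^ 2 ≤ 1 := by nlinarith [sq_nonneg (2 * x + y)]
  have hx1 : -1 ≤ x := by nlinarith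
  have hx2 : x ≤ 1 := by nlinarith
  have hy1 : -1 ≤ y := by nlinarith
  have hy2 : y ≤ 1 := by nlinarith
  interval_cases x <;> interval_cases y <;> omega

namespace IsExceptional

theorem finrank_cases (hE : X.IsExceptional) :
    (finrank k X.V2 = finrank k X.V3 ∧
      (finrank k X.V2 = finrank k X.V1 + 1 ∨ finrank k X.V1 = finrank k X.V2 + 1)) ∨
    (finrank k X.V1 = finrank k X.V2 ∧
      (finrank k X.V3 = finrank k X.V1 + 1 ∨ finrank k X.V1 = finrank k X.V3 + 1)) ∨
    (finrank k X.V1 = finrank k X.V3 ∧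
      (finrank k X.V2 = finrank k X.V1 + 1 ∨ finrank k X.V1 = finrank k X.V2 + 1)) := by
  have h := hom_sub_ext1_s8 X X
  rw [hE.1, hE.2] at h
  push_cast at h
  exact root_cases (by linarith)

theorem isTypeM (hE : X.IsExceptional) (h12 : ¬Function.Surjective X.r12)
    (h23 : ker X.r23 ≠ ⊥) : X.IsTypeM := by
  obtain ⟨_, _⟩ := subsingleton_V1_and_V3_of_hom_self_eq_one hE.1 h12 h23
  have h1 : finrank k X.V1 = 0 := finrank_zero_of_subsingleton
  have h3 : finrank k X.V3 = 0 := finrank_zero_of_subsingleton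
  have := hE.finrank_cases
  exact ⟨h1, by omega, h3⟩

theorem isTypeM' (hE : X.IsExceptional) (h12 : ker X.r12 ≠ ⊥)
    (h23 : range X.r23 ≠ ⊤) : X.IsTypeM' := by
  have := subsingleton_V2_of_hom_self_eq_one hE.1 h12 h23
  have := LinearMap.nontrivial_of_ker_ne_bot h12
  have := LinearMap.nontrivial_of_range_ne_top h23
  have h2 : finrank k X.V2 = 0 := finrank_zero_of_subsingleton
  have := finrank_pos (R := k) (M := X.V1)
  have := finrank_pos (R := k) (M := X.V3)
  have := hE.finrank_cases
  have h1 : finrank k X.V1 = 1 := by omega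
  have h3 : finrank k X.V3 = 1 := by omega
  refine ⟨h1, h2, h3, LinearMap.bijective_of_finrank_eq_one h1 h3 fun h13 => ?_⟩
  -- otherwise `(id, 0, 0)` would be a non-scalar endomorphism
  obtain ⟨c, hc₁, -, hc₃⟩ := eq_smul_id_of_hom_self_eq_one hE.1
    (φ₁ := LinearMap.id) (φ₂ := 0) (φ₃ := 0)
    ⟨by simp [h13], Subsingleton.elim _ _, Subsingleton.elim _ _⟩
  rw [eq_zero_of_zero_eq_smul_id hc₃, zero_smul] at hc₁
  obtain ⟨v, hv⟩ := exists_ne (0 : X.V1)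
  exact hv (LinearMap.congr_fun hc₁ v)

theorem bijective_r23 (hE : X.IsExceptional) (h23 : finrank k X.V2 = finrank k X.V3)
    (hd : finrank k X.V2 = finrank k X.V1 + 1 ∨ finrank k X.V1 = finrank k X.V2 + 1) :
    Function.Bijective X.r23 := by
  have hiff := LinearMap.injective_iff_surjective_of_finrank_eq_finrank (f := X.r23) h23
  rcases hd with hd | hd
  · have hi : Function.Injective X.r23 := by
      by_contra hi
      obtain ⟨-, h2, h3⟩ := hE.isTypeM (LinearMap.not_surjective_of_finrank_lt (by omega))
        (mt LinearMap.ker_eq_bot.mp hi)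
      omega
    exact ⟨hi, hiff.mp hi⟩
  · have hs : Function.Surjective X.r23 := by
      by_contra hs
      obtain ⟨-, h2, h3, -⟩ := hE.isTypeM' (LinearMap.ker_ne_bot_of_finrank_lt (by omega))
        (mt LinearMap.range_eq_top.mp hs)
      omega
    exact ⟨hiff.mpr hs, hs⟩

theorem bijective_r12 (hE : X.IsExceptional) (h12 : finrank k X.V1 = finrank k X.V2)
    (hd : finrank k X.V3 = finrank k X.V1 + 1 ∨ finrank k X.V1 = finrank k X.V3 + 1) :
    Function.Bijective X.r12 := by
  have hiff := LinearMap.injective_iff_surjective_of_finrank_eq_finrank (f := X.r12) h12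
  rcases hd with hd | hd
  · have hi : Function.Injective X.r12 := by
      by_contra hi
      obtain ⟨h1, h2, -, -⟩ := hE.isTypeM' (mt LinearMap.ker_eq_bot.mp hi)
        (mt LinearMap.range_eq_top.mp (LinearMap.not_surjective_of_finrank_lt (by omega)))
      omega
    exact ⟨hi, hiff.mp hi⟩
  · have hs : Function.Surjective X.r12 := by
      by_contra hs
      obtain ⟨h1, h2, -⟩ := hE.isTypeM hs (LinearMap.ker_ne_bot_of_finrank_lt (by omega))
      omega
    exact ⟨hiff.mpr hs, hs⟩

theorem isPreprojective_or_isPreinjective_of_finrank_V2_eq (hE : X.IsExceptional)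
    (h23 : finrank k X.V2 = finrank k X.V3)
    (hd : finrank k X.V2 = finrank k X.V1 + 1 ∨ finrank k X.V1 = finrank k X.V2 + 1) :
    X.IsPreprojective ∨ X.IsPreinjective := by
  obtain ⟨T, hT, hT'⟩ := LinearMap.exists_inverse_of_bijective (hE.bijective_r23 h23 hd)
  have hbp := isBrickPair_of_inverse_r23 hE.1 hT hT'
  rcases hd with hd | hd
  · exact Or.inl (Or.inl ⟨T, hT, hT', hbp.isPencilInjective hd, hd⟩)
  · exact Or.inr (Or.inl ⟨T, hT, hT', hbp.isPencilSurjective hd, hd⟩)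

theorem isPreprojective_or_isPreinjective_of_finrank_V1_eq (hE : X.IsExceptional)
    (h12 : finrank k X.V1 = finrank k X.V2)
    (hd : finrank k X.V3 = finrank k X.V1 + 1 ∨ finrank k X.V1 = finrank k X.V3 + 1) :
    X.IsPreprojective ∨ X.IsPreinjective := by
  obtain ⟨S, hS, hS'⟩ := LinearMap.exists_inverse_of_bijective (hE.bijective_r12 h12 hd)
  have hbp := isBrickPair_of_inverse_r12 hE.1 hS hS'
  rcases hd with hd | hd
  · exact Or.inl (Or.inr ⟨S, hS, hS', hbp.isPencilInjective hd, hd⟩)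
  · exact Or.inr (Or.inr ⟨S, hS, hS', hbp.isPencilSurjective hd, hd⟩)

theorem classification (hE : X.IsExceptional) :
    X.IsTypeM ∨ X.IsTypeM' ∨ X.IsPreprojective ∨ X.IsPreinjective := by
  rcases hE.finrank_cases with ⟨h23, hd⟩ | ⟨h12, hd⟩ | ⟨h13, hd | hd⟩
  · exact Or.inr (Or.inr (hE.isPreprojective_or_isPreinjective_of_finrank_V2_eq h23 hd))
  · exact Or.inr (Or.inr (hE.isPreprojective_or_isPreinjective_of_finrank_V1_eq h12 hd))
  · exact Or.inl (hE.isTypeM (LinearMap.not_surjective_of_finrank_lt (by omega))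
      (LinearMap.ker_ne_bot_of_finrank_lt (by omega)))
  · exact Or.inr (Or.inl (hE.isTypeM' (LinearMap.ker_ne_bot_of_finrank_lt (by omega))
      (mt LinearMap.range_eq_top.mp (LinearMap.not_surjective_of_finrank_lt (by omega)))))

end IsExceptional

end Classification

section Preprojective

variable {X Y : RepQ1 k}

/-- For the types `E1`, `E2` take `j = X.r23`, for `E3`, `E4` take `j = id`. -/
def IsKroneckerFactorization {W : Type*} [AddCommGroup W] [Module k W] (X : RepQ1 k)
    (a b : X.V1 →ₗ[k] W) (j : W →ₗ[k] X.V3) : Prop :=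
  Function.Injective j ∧ j ∘ₗ a = X.r13 ∧ j ∘ₗ b = X.r23 ∘ₗ X.r12

theorem isKroneckerFactorization_of_inverse_r23 {T : X.V3 →ₗ[k] X.V2}
    (hT : T ∘ₗ X.r23 = LinearMap.id) (hT' : X.r23 ∘ₗ T = LinearMap.id) :
    X.IsKroneckerFactorization (T ∘ₗ X.r13) X.r12 X.r23 :=
  ⟨LinearMap.injective_of_comp_eq_id _ _ hT,
    by rw [← LinearMap.comp_assoc, hT', LinearMap.id_comp], rfl⟩

theorem isKroneckerFactorization_id :
    X.IsKroneckerFactorization X.r13 (X.r23 ∘ₗ X.r12) LinearMap.id :=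
  ⟨Function.injective_id, LinearMap.id_comp _, LinearMap.id_comp _⟩

namespace IsExtDual

variable {A : Y.V3 →ₗ[k] X.V1} {B : Y.V2 →ₗ[k] X.V1} {C : Y.V3 →ₗ[k] X.V2}

theorem comp_factorization (h : IsExtDual A B C) {W : Type*} [AddCommGroup W] [Module k W]
    {a b : X.V1 →ₗ[k] W} {j : W →ₗ[k] X.V3} (hf : X.IsKroneckerFactorization a b j) :
    a ∘ₗ (A ∘ₗ Y.r23) + b ∘ₗ B = 0 := by
  obtain ⟨h13, h12, -⟩ := h
  obtain ⟨hj, ha, hb⟩ := hf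
  refine (LinearMap.cancel_left hj).mp ?_
  calc j ∘ₗ (a ∘ₗ (A ∘ₗ Y.r23) + b ∘ₗ B) = X.r13 ∘ₗ A ∘ₗ Y.r23 + X.r23 ∘ₗ X.r12 ∘ₗ B := by
        rw [LinearMap.comp_add, ← LinearMap.comp_assoc _ a j, ha, ← LinearMap.comp_assoc B b j, hb,
          LinearMap.comp_assoc]
    _ = (X.r13 ∘ₗ A + X.r23 ∘ₗ C) ∘ₗ Y.r23 := by
      simp only [h12, LinearMap.add_comp, LinearMap.comp_assoc]
    _ = j ∘ₗ 0 := by rw [h13, LinearMap.zero_comp, LinearMap.comp_zero]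

theorem comp_inverse_r23 (h : IsExtDual A B C) {T : Y.V3 →ₗ[k] Y.V2}
    (hT : Y.r23 ∘ₗ T = LinearMap.id) : (A ∘ₗ Y.r23) ∘ₗ (T ∘ₗ Y.r13) + B ∘ₗ Y.r12 = 0 := by
  rw [LinearMap.comp_assoc, ← LinearMap.comp_assoc Y.r13 T, hT, LinearMap.id_comp, h.2.2]

theorem intertwines {W : Type*} [AddCommGroup W] [Module k W] (h : IsExtDual A B C)
    {a b : X.V1 →ₗ[k] W} (hab : a ∘ₗ (A ∘ₗ Y.r23) + b ∘ₗ B = 0) :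
    a ∘ₗ (A ∘ₗ (Y.r23 ∘ₗ Y.r12)) = b ∘ₗ (A ∘ₗ Y.r13) := by
  have := congrArg (· ∘ₗ Y.r12) hab
  simp only [LinearMap.add_comp, LinearMap.comp_assoc, eq_neg_of_add_eq_zero_right h.2.2,
    LinearMap.comp_neg, LinearMap.zero_comp] at this
  exact add_neg_eq_zero.mp this

theorem eq_zero_of_comp_r23_eq_zero (h : IsExtDual A B C) (hs : Function.Surjective Y.r23)
    (hA : A ∘ₗ Y.r23 = 0) (hB : B = 0) : A = 0 ∧ B = 0 ∧ C = 0 := by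
  refine ⟨(LinearMap.cancel_right hs).mp (by rw [hA, LinearMap.zero_comp]), hB, ?_⟩
  refine (LinearMap.cancel_right hs).mp ?_
  rw [← h.2.1, hB, LinearMap.comp_zero, LinearMap.zero_comp]

theorem eq_zero_of_fst_eq_zero (h : IsExtDual A B C) (hs : Function.Surjective Y.r12)
    (h23 : Function.Injective X.r23 ∨ Function.Surjective Y.r23) (hA : A = 0) :
    A = 0 ∧ B = 0 ∧ C = 0 := by
  obtain ⟨h13, h12, h1⟩ := h
  subst hA
  have hB : B = 0 := (LinearMap.cancel_right hs).mp (by simpa using h1)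
  subst hB
  refine ⟨rfl, rfl, h23.elim (fun hi => ?_) fun hs => ?_⟩
  · exact (LinearMap.cancel_left hi).mp (by simpa using h13)
  · exact (LinearMap.cancel_right hs).mp (by simpa using h12.symm)

end IsExtDual

section Kronecker

variable [IsAlgClosed k] {W : Type*} [AddCommGroup W] [Module k W] {a b : X.V1 →ₗ[k] W}
  {j : W →ₗ[k] X.V3}

theorem finrank_V1_lt_of_isPencilInjective [FiniteDimensional k W]
    (hf : X.IsKroneckerFactorization a b j)
    (hp : IsPencilInjective a b) (h23 : Function.Injective X.r23) (hY : Y.IsPreprojective)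
    (h : ext1 X Y ≠ 0) : finrank k Y.V1 < finrank k X.V1 := by
  obtain ⟨A, B, C, hABC, hne⟩ := (ext1_ne_zero_iff X Y).mp h
  have hab := hABC.comp_factorization hf
  rcases hY with ⟨T, -, hT, hpY, hdY⟩ | ⟨S, -, hS, hpY, hdY⟩
  · have hs : Function.Surjective Y.r23 := LinearMap.surjective_of_comp_eq_id _ _ hT
    have := hp.finrank_le_of_pair hpY hdY
      (fun h0 => hne (hABC.eq_zero_of_comp_r23_eq_zero hs h0.1 h0.2)) hab
      (hABC.comp_inverse_r23 hT)
    omega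
  · have hs : Function.Surjective Y.r12 := LinearMap.surjective_of_comp_eq_id _ _ hS
    have := hp.finrank_le_of_intertwiner hpY hdY
      (fun h0 => hne (hABC.eq_zero_of_fst_eq_zero hs (Or.inl h23) h0)) (hABC.intertwines hab)
    omega

theorem finrank_V1_lt_of_isPencilSurjective [FiniteDimensional k W]
    (hf : X.IsKroneckerFactorization a b j)
    (hp : IsPencilSurjective a b) (hd : finrank k X.V1 = finrank k W + 1)
    (hY : Y.IsPreinjective) (h : ext1 X Y ≠ 0) : finrank k X.V1 < finrank k Y.V1 := by
  obtain ⟨A, B, C, hABC, hne⟩ := (ext1_ne_zero_iff X Y).mp h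
  have hab := hABC.comp_factorization hf
  rcases hY with ⟨T, -, hT, hpY, hdY⟩ | ⟨S, -, hS, hpY, hdY⟩
  · have hs : Function.Surjective Y.r23 := LinearMap.surjective_of_comp_eq_id _ _ hT
    have := hp.finrank_le_of_pair hpY hd
      (fun h0 => hne (hABC.eq_zero_of_comp_r23_eq_zero hs h0.1 h0.2)) hab
      (hABC.comp_inverse_r23 hT)
    omega
  · have hs : Function.Surjective Y.r12 := LinearMap.surjective_of_comp_eq_id _ _ hS
    have h23 : Function.Surjective Y.r23 := by
      have := hpY.surjective_right
      rw [LinearMap.coe_comp] at this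
      exact this.of_comp
    have := hp.finrank_le_of_intertwiner hpY hd
      (fun h0 => hne (hABC.eq_zero_of_fst_eq_zero hs (Or.inr h23) h0)) (hABC.intertwines hab)
    omega

/-- `Z = range A = range B` would satisfy `a Z = b Z`. -/
theorem ext1_eq_zero_of_isPencilInjective (hf : X.IsKroneckerFactorization a b j)
    (hp : IsPencilInjective a b) (h13 : Function.Surjective Y.r13)
    (h12 : Function.Surjective Y.r12) (h23 : Function.Surjective Y.r23) : ext1 X Y = 0 := by
  by_contra h
  obtain ⟨A, B, C, ⟨hA, hC, hB⟩, hne⟩ := (ext1_ne_zero_iff X Y).mp h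
  obtain ⟨hj, ha, hb⟩ := hf
  set Z := range A
  have hBZ : range B = Z := by
    rw [← LinearMap.range_comp_of_range_eq_top B (LinearMap.range_eq_top.mpr h12),
      eq_neg_of_add_eq_zero_right hB, LinearMap.range_neg,
      LinearMap.range_comp_of_range_eq_top A (LinearMap.range_eq_top.mpr h13)]
  have hCZ : range C = Z.map X.r12 := by
    rw [← LinearMap.range_comp_of_range_eq_top C (LinearMap.range_eq_top.mpr h23), ← hC,
      LinearMap.range_comp, hBZ]
  have hmap : (Z.map a).map j = (Z.map b).map j := by
    rw [← Submodule.map_comp, ha, ← Submodule.map_comp, hb, Submodule.map_comp, ← hCZ,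
      ← LinearMap.range_comp, ← LinearMap.range_comp, eq_neg_of_add_eq_zero_right hA,
      LinearMap.range_neg]
  have hZ : Z = ⊥ := by
    by_contra hZ
    exact hp.map_ne_map hZ (Submodule.map_injective_of_injective hj hmap)
  refine hne ⟨LinearMap.range_eq_bot.mp hZ, LinearMap.range_eq_bot.mp (hBZ.trans hZ), ?_⟩
  rw [← LinearMap.range_eq_bot, hCZ, hZ, Submodule.map_bot]

end Kronecker

theorem IsPreinjective.surjective_arrows (hY : Y.IsPreinjective) :
    Function.Surjective Y.r13 ∧ Function.Surjective Y.r12 ∧ Function.Surjective Y.r23 := by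
  rcases hY with ⟨T, -, hT, hp, -⟩ | ⟨S, -, hS, hp, -⟩
  · have h23 : Function.Surjective Y.r23 := LinearMap.surjective_of_comp_eq_id _ _ hT
    refine ⟨?_, hp.surjective_right, h23⟩
    rw [← LinearMap.id_comp Y.r13, ← hT, LinearMap.comp_assoc, LinearMap.coe_comp]
    exact h23.comp hp.surjective_left
  · have h23 := hp.surjective_right
    rw [LinearMap.coe_comp] at h23
    exact ⟨hp.surjective_left, LinearMap.surjective_of_comp_eq_id _ _ hS,
      h23.of_comp⟩

variable [IsAlgClosed k]

theorem IsPreprojective.finrank_V1_lt (hX : X.IsPreprojective) (hY : Y.IsPreprojective)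
    (h : ext1 X Y ≠ 0) : finrank k Y.V1 < finrank k X.V1 := by
  rcases hX with ⟨T, hT, hT', hp, -⟩ | ⟨S, -, hS, hp, -⟩
  · exact finrank_V1_lt_of_isPencilInjective (isKroneckerFactorization_of_inverse_r23 hT hT') hp
      (LinearMap.injective_of_comp_eq_id _ _ hT) hY h
  · have h23 : Function.Injective X.r23 := by
      have hi := hp.injective_right
      rw [LinearMap.coe_comp] at hi
      exact hi.of_comp_right (LinearMap.surjective_of_comp_eq_id _ _ hS)
    exact finrank_V1_lt_of_isPencilInjective isKroneckerFactorization_id hp h23 hY h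

theorem IsPreinjective.finrank_V1_lt (hX : X.IsPreinjective) (hY : Y.IsPreinjective)
    (h : ext1 X Y ≠ 0) : finrank k X.V1 < finrank k Y.V1 := by
  rcases hX with ⟨T, hT, hT', hp, hd⟩ | ⟨-, -, -, hp, hd⟩
  · exact finrank_V1_lt_of_isPencilSurjective (isKroneckerFactorization_of_inverse_r23 hT hT') hp
      hd hY h
  · exact finrank_V1_lt_of_isPencilSurjective isKroneckerFactorization_id hp hd hY h

theorem IsPreprojective.ext1_eq_zero (hX : X.IsPreprojective) (hY : Y.IsPreinjective) :
    ext1 X Y = 0 := by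
  obtain ⟨h13, h12, h23⟩ := hY.surjective_arrows
  rcases hX with ⟨T, hT, hT', hp, -⟩ | ⟨-, -, -, hp, -⟩
  · exact ext1_eq_zero_of_isPencilInjective (isKroneckerFactorization_of_inverse_r23 hT hT') hp
      h13 h12 h23
  · exact ext1_eq_zero_of_isPencilInjective isKroneckerFactorization_id hp h13 h12 h23

theorem ext1_eq_zero_or_ext1_eq_zero (hX : X.IsPreprojective ∨ X.IsPreinjective)
    (hY : Y.IsPreprojective ∨ Y.IsPreinjective) : ext1 X Y = 0 ∨ ext1 Y X = 0 := by
  by_contra! h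
  rcases hX with hX | hX <;> rcases hY with hY | hY
  · have := hX.finrank_V1_lt hY h.1
    have := hY.finrank_V1_lt hX h.2
    omega
  · exact h.1 (hX.ext1_eq_zero hY)
  · exact h.2 (hY.ext1_eq_zero hX)
  · have := hX.finrank_V1_lt hY h.1
    have := hY.finrank_V1_lt hX h.2
    omega

end Preprojective

section TypeM

variable {X Z : RepQ1 k}

theorem ext1_eq_zero_of_isTypeM_of_injective (hZ : Z.IsTypeM) (hX : Function.Injective X.r12) :
    ext1 X Z = 0 := by
  have : Subsingleton Z.V3 := finrank_zero_iff.mp hZ.2.2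
  by_contra h
  obtain ⟨A, B, C, ⟨-, h12, -⟩, hne⟩ := (ext1_ne_zero_iff X Z).mp h
  refine hne ⟨Subsingleton.elim _ _, (LinearMap.cancel_left hX).mp ?_, Subsingleton.elim _ _⟩
  rw [h12, Subsingleton.elim C 0, LinearMap.zero_comp, LinearMap.comp_zero]

theorem ext1_eq_zero_of_isTypeM_of_surjective (hZ : Z.IsTypeM) (hX : Function.Surjective X.r23) :
    ext1 Z X = 0 := by
  have : Subsingleton Z.V1 := finrank_zero_iff.mp hZ.1
  by_contra h
  obtain ⟨A, B, C, ⟨-, h12, -⟩, hne⟩ := (ext1_ne_zero_iff Z X).mp h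
  refine hne ⟨Subsingleton.elim _ _, Subsingleton.elim _ _, (LinearMap.cancel_right hX).mp ?_⟩
  rw [← h12, Subsingleton.elim B 0, LinearMap.comp_zero, LinearMap.zero_comp]

theorem ext1_eq_zero_of_isTypeM'_of_injective (hZ : Z.IsTypeM') (hX : Function.Injective X.r23) :
    ext1 X Z = 0 := by
  have : Subsingleton Z.V2 := finrank_zero_iff.mp hZ.2.1
  by_contra h
  obtain ⟨A, B, C, ⟨h13, -, h1⟩, hne⟩ := (ext1_ne_zero_iff X Z).mp h
  have hB : B = 0 := Subsingleton.elim _ _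
  have hA : A = 0 := (LinearMap.cancel_right hZ.2.2.2.2).mp (by simpa [hB] using h1)
  exact hne ⟨hA, hB, (LinearMap.cancel_left hX).mp (by simpa [hA] using h13)⟩

theorem ext1_eq_zero_of_isTypeM'_of_surjective (hZ : Z.IsTypeM') (hX : Function.Surjective X.r12) :
    ext1 Z X = 0 := by
  have : Subsingleton Z.V2 := finrank_zero_iff.mp hZ.2.1
  by_contra h
  obtain ⟨A, B, C, ⟨h13, -, h1⟩, hne⟩ := (ext1_ne_zero_iff Z X).mp h
  have hC : C = 0 := Subsingleton.elim _ _
  have hA : A = 0 := (LinearMap.cancel_left hZ.2.2.2.1).mp (by simpa [hC] using h13)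
  exact hne ⟨hA, (LinearMap.cancel_right hX).mp (by simpa [hA] using h1), hC⟩

theorem IsTypeM.isTypeM' (hX : X.IsTypeM) {Y : RepQ1 k} (hY : Y.IsExceptional)
    (h1 : ext1 X Y ≠ 0) (h2 : ext1 Y X ≠ 0) : Y.IsTypeM' :=
  hY.isTypeM' (fun h => h2 (ext1_eq_zero_of_isTypeM_of_injective hX (LinearMap.ker_eq_bot.mp h)))
    fun h => h1 (ext1_eq_zero_of_isTypeM_of_surjective hX (LinearMap.range_eq_top.mp h))

theorem IsTypeM'.isTypeM (hX : X.IsTypeM') {Y : RepQ1 k} (hY : Y.IsExceptional)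
    (h1 : ext1 X Y ≠ 0) (h2 : ext1 Y X ≠ 0) : Y.IsTypeM :=
  hY.isTypeM (fun h => h1 (ext1_eq_zero_of_isTypeM'_of_surjective hX h))
    fun h => h2 (ext1_eq_zero_of_isTypeM'_of_injective hX (LinearMap.ker_eq_bot.mp h))

theorem IsTypeM.iso (h : X.IsTypeM) : Iso X (Mrep k) := by
  obtain ⟨h1, h2, h3⟩ := h
  have : Subsingleton X.V1 := finrank_zero_iff.mp h1
  have : Subsingleton ((Mrep k).V3) := inferInstanceAs (Subsingleton (Fin 0 → k))
  refine ⟨LinearEquiv.ofFinrankEq _ _ (h1.trans (Module.finrank_fin_fun k).symm),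
    LinearEquiv.ofFinrankEq _ _ (h2.trans (Module.finrank_fin_fun k).symm),
    LinearEquiv.ofFinrankEq _ _ (h3.trans (Module.finrank_fin_fun k).symm), ?_, ?_, ?_⟩ <;>
  exact Subsingleton.elim _ _

theorem IsTypeM'.iso (h : X.IsTypeM') : Iso X (Mprep k) := by
  obtain ⟨h1, h2, -, h13⟩ := h
  have : Subsingleton X.V2 := finrank_zero_iff.mp h2
  have : Subsingleton ((Mprep k).V2) := inferInstanceAs (Subsingleton (Fin 0 → k))
  let e₁ : X.V1 ≃ₗ[k] (Mprep k).V1 :=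
    LinearEquiv.ofFinrankEq _ _ (h1.trans (Module.finrank_fin_fun k).symm)
  refine ⟨e₁, LinearEquiv.ofFinrankEq _ _ (h2.trans (Module.finrank_fin_fun k).symm),
    (LinearEquiv.ofBijective X.r13 h13).symm.trans e₁, ?_, Subsingleton.elim _ _,
    Subsingleton.elim _ _⟩
  ext x
  change e₁ ((LinearEquiv.ofBijective X.r13 h13).symm (X.r13 x)) = e₁ x
  rw [LinearEquiv.ofBijective_symm_apply_apply]

end TypeM

end RepQ1

/-- `{M, M'}` is the unique Ext-nontrivial couple of exceptional representations of `Q1`. -/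
theorem statement_8 (k : Type u) [Field k] [IsAlgClosed k] (X Y : RepQ1 k)
    (hX : X.IsExceptional) (hY : Y.IsExceptional)
    (h1 : RepQ1.ext1 X Y ≠ 0) (h2 : RepQ1.ext1 Y X ≠ 0) :
    (RepQ1.Iso X (Mrep k) ∧ RepQ1.Iso Y (Mprep k)) ∨
    (RepQ1.Iso X (Mprep k) ∧ RepQ1.Iso Y (Mrep k)) := by
  rcases hX.classification with hXM | hXM' | hXE
  · exact Or.inl ⟨hXM.iso, (hXM.isTypeM' hY h1 h2).iso⟩
  · exact Or.inr ⟨hXM'.iso, (hXM'.isTypeM hY h1 h2).iso⟩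
  rcases hY.classification with hYM | hYM' | hYE
  · exact Or.inr ⟨(hYM.isTypeM' hX h2 h1).iso, hYM.iso⟩
  · exact Or.inl ⟨(hYM'.isTypeM hX h2 h1).iso, hYM'.iso⟩
  · exact ((RepQ1.ext1_eq_zero_or_ext1_eq_zero hXE hYE).elim h1 h2).elim
end
end
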